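/- arXiv:2106.02371 — 2 statements merged into one kernel-verified Lean document; each statement's English description precedes it below -/
import Mathlib

section
/- Let μ : 𝒴 → ℝ satisfy μ_y ≥ 0 for all y ∈ 𝒴 and Σ_{y∈𝒴} μ_y ≤ 1, set μ_0 = 1 − Σ_{y∈𝒴} μ_y, and let ν be the probability measure on 𝒴₀ with ν({ŷ}) = μ_ŷ for each ŷ ∈ 𝒴₀. Then −G*(μ) equals the supremum, over all Borel probability measures π on 𝒴₀ × ℝ^{𝒴₀} whose first marginal is ν and whose second marginal is P, of ∫ ε_ŷ dπ(ŷ, ε) (the integral of the map (ŷ, ε) ↦ ε(ŷ)). -/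
open MeasureTheory

noncomputable section

/-- Extension of `U : 𝒴 → ℝ` to `𝒴₀ = Option 𝒴` by `U_0 = 0`. -/
def optExt {Y : Type*} (U : Y → ℝ) : Option Y → ℝ := fun yo => yo.elim 0 U

/-- Maximum of a function over a finite nonempty type. -/
def fmax {ι : Type*} [Fintype ι] [Nonempty ι] (f : ι → ℝ) : ℝ :=
  Finset.univ.sup' Finset.univ_nonempty f

variable {Y : Type*} [Fintype Y] [Nonempty Y]

instance : MeasurableSpace (Option Y) := ⊤

/-- The Emax operator `G(U) = ∫ max_{ŷ ∈ 𝒴₀} (U_ŷ + ε_ŷ) dP(ε)`. -/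
def Emax (P : Measure (Option Y → ℝ)) (U : Y → ℝ) : ℝ :=
  ∫ ε, fmax (fun yo => optExt U yo + ε yo) ∂P

/-- The Legendre–Fenchel transform of the Emax operator, valued in `ℝ ∪ {+∞} ⊆ EReal`. -/
def EmaxStar (P : Measure (Option Y → ℝ)) (μ : Y → ℝ) : EReal :=
  ⨆ U : Y → ℝ, (((∑ y, μ y * U y) - Emax P U : ℝ) : EReal)

set_option linter.unusedSectionVars false
set_option linter.unusedVariables false

section FmaxLemmas
variable {ι : Type*} [Fintype ι] [Nonempty ι]
lemma le_fmax (f : ι → ℝ) (i : ι) : f i ≤ fmax f := Finset.le_sup' f (Finset.mem_univ i)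
lemma fmax_le {f : ι → ℝ} {a : ℝ} (h : ∀ i, f i ≤ a) : fmax f ≤ a :=
  Finset.sup'_le _ _ fun i _ => h i
lemma exists_fmax (f : ι → ℝ) : ∃ i, fmax f = f i := by
  obtain ⟨i, _, hi⟩ := Finset.exists_mem_eq_sup' (Finset.univ_nonempty (α := ι)) f
  exact ⟨i, hi⟩
lemma fmax_add_const (f : ι → ℝ) (c : ℝ) : fmax (fun i => f i + c) = fmax f + c := by
  apply le_antisymm
  · exact fmax_le fun i => (by have := le_fmax f i; linarith)
  · obtain ⟨i, hi⟩ := exists_fmax f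
    rw [hi]
    exact le_fmax (fun i => f i + c) i
lemma measurable_fmax {α : Type*} [MeasurableSpace α] {F : ι → α → ℝ}
    (h : ∀ i, Measurable (F i)) : Measurable fun x => fmax fun i => F i x := by
  have key : ∀ (s : Finset ι) (hs : s.Nonempty),
      Measurable fun x => s.sup' hs (fun i => F i x) := by
    intro s hs
    induction hs using Finset.Nonempty.cons_induction with
    | singleton i => simpa using h i
    | cons i s his hs ih =>
        have : (fun x => (Finset.cons i s his).sup' (Finset.cons_nonempty his) (fun j => F j x))
            = fun x => max (F i x) (s.sup' hs fun j => F j x) :=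
          funext fun x => Finset.sup'_cons hs (fun j => F j x)
        rw [this]
        exact (h i).max ih
  exact key _ _
end FmaxLemmas

section OT
instance : MeasurableSingletonClass (Option Y) :=
  ⟨fun _ => MeasurableSpace.measurableSet_top⟩
def gmax (ε : Option Y → ℝ) : ℝ := fmax fun yo => |ε yo|
lemma abs_le_gmax (ε : Option Y → ℝ) (yo : Option Y) : |ε yo| ≤ gmax ε :=
  le_fmax (fun yo => |ε yo|) yo
lemma gmax_nonneg (ε : Option Y → ℝ) : 0 ≤ gmax ε :=
  (abs_nonneg _).trans (abs_le_gmax ε (Classical.arbitrary _))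
lemma measurable_gmax : Measurable (gmax (Y := Y)) :=
  measurable_fmax fun yo => (measurable_pi_apply yo).abs
def valT (m : Option Y → Measure (Option Y → ℝ)) : ℝ := ∑ yo, ∫ ε, ε yo ∂(m yo)
def Feas (P : Measure (Option Y → ℝ)) (w : Option Y → ℝ)
    (m : Option Y → Measure (Option Y → ℝ)) : Prop :=
  (∑ yo, m yo) = P ∧ ∀ yo, m yo Set.univ = ENNReal.ofReal (w yo)
def simplexW (w : Option Y → ℝ) : Prop := (∀ yo, 0 ≤ w yo) ∧ ∑ yo, w yo = 1
variable {P : Measure (Option Y → ℝ)}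
lemma Feas.le_P {w m} (hm : Feas P w m) (yo : Option Y) : m yo ≤ P := by
  rw [← hm.1, Measure.le_iff]
  intro s hs
  rw [Measure.finset_sum_apply]
  exact Finset.single_le_sum (f := fun i => m i s) (fun i _ => zero_le) (Finset.mem_univ yo)
lemma integrable_gmax_of_le {m : Measure (Option Y → ℝ)} (h : m ≤ P)
    (hP : Integrable gmax P) : Integrable gmax m := hP.mono_measure h
lemma integrable_eval_of_le {m : Measure (Option Y → ℝ)} (h : m ≤ P)
    (hP : Integrable gmax P) (yo : Option Y) : Integrable (fun ε => ε yo) m :=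
  (integrable_gmax_of_le h hP).mono' (measurable_pi_apply yo).aestronglyMeasurable
    (Filter.Eventually.of_forall fun ε => by
      rw [Real.norm_eq_abs]; exact abs_le_gmax ε yo)
lemma sum_integral_gmax {w m} (hm : Feas P w m) (hP : Integrable gmax P) :
    ∑ yo, ∫ ε, gmax ε ∂(m yo) = ∫ ε, gmax ε ∂P := by
  rw [← integral_finset_sum_measure (fun i _ => integrable_gmax_of_le (hm.le_P i) hP), hm.1]
lemma abs_valT_le {w m} (hm : Feas P w m) (hP : Integrable gmax P) :
    |valT m| ≤ ∫ ε, gmax ε ∂P := by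
  rw [← sum_integral_gmax hm hP]
  refine (Finset.abs_sum_le_sum_abs _ _).trans (Finset.sum_le_sum fun yo _ => ?_)
  have h1 : |∫ ε, ε yo ∂(m yo)| ≤ ∫ ε, |ε yo| ∂(m yo) := by
    simpa [Real.norm_eq_abs] using norm_integral_le_integral_norm (μ := m yo) (fun ε => ε yo)
  refine h1.trans ?_
  exact integral_mono_of_nonneg (Filter.Eventually.of_forall fun ε => abs_nonneg _)
    (integrable_gmax_of_le (hm.le_P yo) hP)
    (Filter.Eventually.of_forall fun ε => abs_le_gmax ε yo)

-- NEW PART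
def TVals (P : Measure (Option Y → ℝ)) (w : Option Y → ℝ) : Set ℝ :=
  {v | ∃ m, Feas P w m ∧ valT m = v}

def hval (P : Measure (Option Y → ℝ)) (w : Option Y → ℝ) : ℝ := sSup (TVals P w)

lemma TVals_nonempty [IsProbabilityMeasure P] {w} (hw : simplexW w) :
    (TVals P w).Nonempty := by
  refine ⟨valT (fun yo => ENNReal.ofReal (w yo) • P), ⟨_, ⟨?_, ?_⟩, rfl⟩⟩
  · rw [← Finset.sum_smul, ← ENNReal.ofReal_sum_of_nonneg (fun i _ => hw.1 i), hw.2]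
    simp
  · intro yo
    simp [measure_univ]

lemma TVals_bddAbove (hP : Integrable gmax P) (w) : BddAbove (TVals P w) := by
  refine ⟨∫ ε, gmax ε ∂P, ?_⟩
  rintro v ⟨m, hm, rfl⟩
  exact (le_abs_self _).trans (abs_valT_le hm hP)

lemma le_hval (hP : Integrable gmax P) {w m} (hm : Feas P w m) : valT m ≤ hval P w :=
  le_csSup (TVals_bddAbove hP w) ⟨m, hm, rfl⟩

lemma hval_le (hP : Integrable gmax P) {w} (hne : (TVals P w).Nonempty) {a : ℝ}
    (h : ∀ m, Feas P w m → valT m ≤ a) : hval P w ≤ a :=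
  csSup_le hne (by rintro v ⟨m, hm, rfl⟩; exact h m hm)

def tailI (P : Measure (Option Y → ℝ)) (R : ℝ) : ℝ := ∫ ε in {ε | R < gmax ε}, gmax ε ∂P

lemma tailI_nonneg (R : ℝ) : 0 ≤ tailI P R :=
  setIntegral_nonneg (measurableSet_lt measurable_const measurable_gmax)
    (fun ε _ => gmax_nonneg ε)

lemma exists_tail_small (hP : Integrable gmax P) {δ : ℝ} (hδ : 0 < δ) :
    ∃ R : ℝ, 0 ≤ R ∧ tailI P R ≤ δ := by
  have hmeas : ∀ n : ℕ, MeasurableSet {ε : Option Y → ℝ | (n : ℝ) < gmax ε} :=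
    fun n => measurableSet_lt measurable_const measurable_gmax
  have htend : Filter.Tendsto (fun n : ℕ => ∫ ε, Set.indicator {ε | (n:ℝ) < gmax ε} gmax ε ∂P)
      Filter.atTop (nhds (∫ ε, (0:ℝ) ∂P)) := by
    apply tendsto_integral_of_dominated_convergence gmax
    · exact fun n => ((measurable_gmax.indicator (hmeas n))).aestronglyMeasurable
    · exact hP
    · intro n
      filter_upwards with ε
      rw [Real.norm_eq_abs]
      rcases Set.indicator_eq_zero_or_self {ε | (n:ℝ) < gmax ε} gmax ε with h | h <;> rw [h]
      · simpa using gmax_nonneg ε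
      · rw [abs_of_nonneg (gmax_nonneg ε)]
    · filter_upwards with ε
      have : ∀ᶠ n : ℕ in Filter.atTop, Set.indicator {ε | (n:ℝ) < gmax ε} gmax ε = 0 := by
        obtain ⟨n₀, hn₀⟩ := exists_nat_ge (gmax ε)
        filter_upwards [Filter.eventually_ge_atTop n₀] with n hn
        apply Set.indicator_of_notMem
        simp only [Set.mem_setOf_eq, not_lt]
        exact (hn₀.trans (by exact_mod_cast hn))
      exact Filter.Tendsto.congr' (Filter.EventuallyEq.symm this) tendsto_const_nhds
  rw [integral_zero] at htend
  have h2 : ∀ᶠ n : ℕ in Filter.atTop,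
      (∫ ε, Set.indicator {ε | (n:ℝ) < gmax ε} gmax ε ∂P) ≤ δ :=
    htend.eventually_le_const hδ
  obtain ⟨n, hn⟩ := h2.exists
  refine ⟨n, Nat.cast_nonneg n, ?_⟩
  rw [tailI, ← integral_indicator (hmeas n)]
  exact hn


lemma realloc [IsProbabilityMeasure P] (hP : Integrable gmax P) {w w' : Option Y → ℝ}
    (hw : simplexW w) (hw' : simplexW w') {m} (hm : Feas P w m) {R : ℝ} (hR : 0 ≤ R) :
    ∃ m', Feas P w' m' ∧ valT m - 2 * (R * ∑ yo, |w yo - w' yo| + tailI P R) ≤ valT m' := by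
  classical
  have habs_nonneg : 0 ≤ ∑ yo, |w yo - w' yo| := Finset.sum_nonneg fun _ _ => abs_nonneg _
  have htail := tailI_nonneg (P := P) R
  set dec : Finset (Option Y) := Finset.univ.filter (fun yo => w' yo < w yo) with hdec
  set ndec : Finset (Option Y) := Finset.univ.filter (fun yo => ¬ w' yo < w yo) with hndec
  set D : ℝ := ∑ a ∈ dec, (w a - w' a) with hDdef
  have hterm : ∀ a ∈ dec, 0 ≤ w a - w' a := by
    intro a ha
    rw [hdec, Finset.mem_filter] at ha
    linarith [ha.2]
  have hterm' : ∀ b ∈ ndec, 0 ≤ w' b - w b := by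
    intro b hb
    rw [hndec, Finset.mem_filter] at hb
    have := not_lt.mp hb.2
    linarith
  have hD0 : 0 ≤ D := Finset.sum_nonneg hterm
  have h1 : ∑ a ∈ dec, w a + ∑ a ∈ ndec, w a = 1 := by
    rw [hdec, hndec, Finset.sum_filter_add_sum_filter_not]
    exact hw.2
  have h2 : ∑ a ∈ dec, w' a + ∑ a ∈ ndec, w' a = 1 := by
    rw [hdec, hndec, Finset.sum_filter_add_sum_filter_not]
    exact hw'.2
  have hDdec : D = ∑ a ∈ dec, w a - ∑ a ∈ dec, w' a := by
    rw [hDdef, Finset.sum_sub_distrib]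
  have hcompl : ∑ b ∈ ndec, (w' b - w b) = D := by
    rw [Finset.sum_sub_distrib]
    linarith
  rcases eq_or_lt_of_le hD0 with hD | hD
  · -- D = 0 : w = w'
    have hzero : ∀ a ∈ dec, w a - w' a = 0 :=
      (Finset.sum_eq_zero_iff_of_nonneg hterm).mp hD.symm
    have hdece : ∀ yo, yo ∉ dec := by
      intro yo hyo
      have h3 := hzero yo hyo
      rw [hdec, Finset.mem_filter] at hyo
      linarith [hyo.2]
    have hzero' : ∀ b ∈ ndec, w' b - w b = 0 :=
      (Finset.sum_eq_zero_iff_of_nonneg hterm').mp (by rw [hcompl, ← hD])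
    have hweq : ∀ yo, w yo = w' yo := by
      intro yo
      have : yo ∈ ndec := by
        rw [hndec, Finset.mem_filter]
        refine ⟨Finset.mem_univ _, ?_⟩
        intro hlt
        exact hdece yo (by rw [hdec, Finset.mem_filter]; exact ⟨Finset.mem_univ _, hlt⟩)
      linarith [hzero' yo this]
    refine ⟨m, ⟨hm.1, fun yo => by rw [hm.2 yo, hweq yo]⟩, ?_⟩
    nlinarith [mul_nonneg hR habs_nonneg]
  · -- 0 < D
    have hwpos : ∀ a ∈ dec, 0 < w a := by
      intro a ha
      rw [hdec, Finset.mem_filter] at ha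
      exact (hw'.1 a).trans_lt ha.2
    have hratio_nonneg : ∀ a ∈ dec, 0 ≤ (w a - w' a) / w a :=
      fun a ha => div_nonneg (hterm a ha) (hwpos a ha).le
    have hratio_le_one : ∀ a ∈ dec, (w a - w' a) / w a ≤ 1 := by
      intro a ha
      rw [div_le_one (hwpos a ha)]
      linarith [hw'.1 a]
    set r : Measure (Option Y → ℝ) := ∑ a ∈ dec, ENNReal.ofReal ((w a - w' a) / w a) • m a
      with hrdef
    have hr_le : r ≤ P := by
      rw [Measure.le_iff]
      intro s hs
      rw [hrdef, Measure.finset_sum_apply]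
      calc ∑ a ∈ dec, (ENNReal.ofReal ((w a - w' a) / w a) • m a) s
          ≤ ∑ a ∈ dec, m a s := Finset.sum_le_sum fun a ha => by
            rw [Measure.smul_apply, smul_eq_mul]
            exact mul_le_of_le_one_left zero_le
              (ENNReal.ofReal_le_one.mpr (hratio_le_one a ha))
        _ ≤ ∑ a, m a s := Finset.sum_le_sum_of_subset (Finset.subset_univ dec)
        _ = P s := by rw [← Measure.finset_sum_apply, hm.1]
    have hr_univ : r Set.univ = ENNReal.ofReal D := by
      rw [hrdef, Measure.finset_sum_apply]
      rw [Finset.sum_congr rfl (fun a ha => ?_), ← ENNReal.ofReal_sum_of_nonneg hterm]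
      rw [Measure.smul_apply, smul_eq_mul, hm.2 a, ← ENNReal.ofReal_mul (hratio_nonneg a ha),
        div_mul_cancel₀ _ (hwpos a ha).ne']
    set lam : Option Y → ℝ := fun yo => (w' yo - w yo) / D with hlam
    have hlam_nonneg : ∀ b ∈ ndec, 0 ≤ lam b := fun b hb => div_nonneg (hterm' b hb) hD0
    have hlam_sum : ∑ b ∈ ndec, lam b = 1 := by
      rw [hlam, ← Finset.sum_div, hcompl, div_self hD.ne']
    set m' : Option Y → Measure (Option Y → ℝ) := fun yo =>
      if w' yo < w yo then ENNReal.ofReal (w' yo / w yo) • m yo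
      else m yo + ENNReal.ofReal (lam yo) • r with hm'def
    have hmem_dec : ∀ yo, w' yo < w yo → yo ∈ dec := by
      intro yo h
      rw [hdec, Finset.mem_filter]
      exact ⟨Finset.mem_univ _, h⟩
    have hmem_ndec : ∀ yo, ¬ w' yo < w yo → yo ∈ ndec := by
      intro yo h
      rw [hndec, Finset.mem_filter]
      exact ⟨Finset.mem_univ _, h⟩
    -- masses
    have hmass : ∀ yo, m' yo Set.univ = ENNReal.ofReal (w' yo) := by
      intro yo
      rw [hm'def]
      by_cases h : w' yo < w yo
      · have hd := hmem_dec yo h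
        simp only [if_pos h]
        rw [Measure.smul_apply, smul_eq_mul, hm.2 yo,
          ← ENNReal.ofReal_mul (div_nonneg (hw'.1 yo) (hwpos yo hd).le),
          div_mul_cancel₀ _ (hwpos yo hd).ne']
      · have hn := hmem_ndec yo h
        simp only [if_neg h]
        rw [Measure.add_apply, Measure.smul_apply, smul_eq_mul, hm.2 yo, hr_univ,
          ← ENNReal.ofReal_mul (hlam_nonneg yo hn), hlam, div_mul_cancel₀ _ hD.ne',
          ← ENNReal.ofReal_add (hw.1 yo) (hterm' yo hn)]
        ring_nf
    -- sum
    have hsum' : ∑ yo, m' yo = P := by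
      have hsplit' := Finset.sum_filter_add_sum_filter_not Finset.univ (fun yo => w' yo < w yo) m'
      have hsplitm := Finset.sum_filter_add_sum_filter_not Finset.univ (fun yo => w' yo < w yo) m
      rw [← hdec, ← hndec] at hsplit' hsplitm
      have e1 : ∑ yo ∈ dec, m' yo = ∑ yo ∈ dec, ENNReal.ofReal (w' yo / w yo) • m yo := by
        refine Finset.sum_congr rfl fun a ha => ?_
        rw [hdec, Finset.mem_filter] at ha
        rw [hm'def]
        simp only [if_pos ha.2]
      have e2 : ∑ yo ∈ ndec, m' yo = (∑ yo ∈ ndec, m yo) + r := by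
        have e2' : ∑ yo ∈ ndec, m' yo = ∑ yo ∈ ndec, (m yo + ENNReal.ofReal (lam yo) • r) := by
          refine Finset.sum_congr rfl fun b hb => ?_
          rw [hndec, Finset.mem_filter] at hb
          rw [hm'def]
          simp only [if_neg hb.2]
        rw [e2', Finset.sum_add_distrib, ← Finset.sum_smul,
          ← ENNReal.ofReal_sum_of_nonneg hlam_nonneg, hlam_sum, ENNReal.ofReal_one, one_smul]
      have e3 : ∑ yo ∈ dec, ENNReal.ofReal (w' yo / w yo) • m yo + r = ∑ yo ∈ dec, m yo := by
        rw [hrdef, ← Finset.sum_add_distrib]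
        refine Finset.sum_congr rfl fun a ha => ?_
        rw [← add_smul, ← ENNReal.ofReal_add (div_nonneg (hw'.1 a) (hwpos a ha).le)
          (hratio_nonneg a ha), ← add_div]
        rw [show w' a + (w a - w' a) = w a by ring, div_self (hwpos a ha).ne',
          ENNReal.ofReal_one, one_smul]
      rw [← hsplit', e1, e2, add_comm (∑ yo ∈ ndec, m yo) r, ← add_assoc, e3, hsplitm]
      exact hm.1
    -- integrability facts
    have hInt_m : ∀ yo, Integrable gmax (m yo) := fun yo => integrable_gmax_of_le (hm.le_P yo) hP
    have hInt_r : Integrable gmax r := integrable_gmax_of_le hr_le hP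
    have habs_int : ∀ (ρ : Measure (Option Y → ℝ)), ρ ≤ P → ∀ yo,
        |∫ ε, ε yo ∂ρ| ≤ ∫ ε, gmax ε ∂ρ := by
      intro ρ hρ yo
      have h1 : |∫ ε, ε yo ∂ρ| ≤ ∫ ε, |ε yo| ∂ρ := by
        simpa [Real.norm_eq_abs] using norm_integral_le_integral_norm (μ := ρ) (fun ε => ε yo)
      exact h1.trans (integral_mono (integrable_eval_of_le hρ hP yo).abs
        (integrable_gmax_of_le hρ hP) (fun ε => abs_le_gmax ε yo))
    have hIgr : ∫ ε, gmax ε ∂r = ∑ a ∈ dec, ((w a - w' a) / w a) * ∫ ε, gmax ε ∂(m a) := by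
      rw [hrdef, integral_finset_sum_measure
        (fun a _ => (hInt_m a).smul_measure ENNReal.ofReal_ne_top)]
      refine Finset.sum_congr rfl fun a ha => ?_
      rw [integral_smul_measure, ENNReal.toReal_ofReal (hratio_nonneg a ha), smul_eq_mul]
    have hval_m : valT m = ∑ a ∈ dec, ∫ ε, ε a ∂(m a) + ∑ b ∈ ndec, ∫ ε, ε b ∂(m b) := by
      rw [valT, ← Finset.sum_filter_add_sum_filter_not Finset.univ (fun yo => w' yo < w yo)
        (fun yo => ∫ ε, ε yo ∂(m yo)), ← hdec, ← hndec]
    have hval_m' : valT m' = ∑ a ∈ dec, (w' a / w a) * ∫ ε, ε a ∂(m a)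
        + ∑ b ∈ ndec, (∫ ε, ε b ∂(m b) + lam b * ∫ ε, ε b ∂r) := by
      rw [valT, ← Finset.sum_filter_add_sum_filter_not Finset.univ (fun yo => w' yo < w yo)
        (fun yo => ∫ ε, ε yo ∂(m' yo)), ← hdec, ← hndec]
      congr 1
      · refine Finset.sum_congr rfl fun a ha => ?_
        rw [hdec, Finset.mem_filter] at ha
        rw [hm'def]
        simp only [if_pos ha.2]
        rw [integral_smul_measure,
          ENNReal.toReal_ofReal (div_nonneg (hw'.1 a) (hwpos a (hmem_dec a ha.2)).le), smul_eq_mul]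
      · refine Finset.sum_congr rfl fun b hb => ?_
        rw [hndec, Finset.mem_filter] at hb
        rw [hm'def]
        simp only [if_neg hb.2]
        rw [integral_add_measure (integrable_eval_of_le (hm.le_P b) hP b)
          ((integrable_eval_of_le hr_le hP b).smul_measure ENNReal.ofReal_ne_top),
          integral_smul_measure, ENNReal.toReal_ofReal (hlam_nonneg b (hmem_ndec b hb.2)),
          smul_eq_mul]
    have key : valT m - valT m' ≤ 2 * ∫ ε, gmax ε ∂r := by
      have hA : ∀ a ∈ dec, ∫ ε, ε a ∂(m a) - (w' a / w a) * ∫ ε, ε a ∂(m a)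
          ≤ ((w a - w' a) / w a) * ∫ ε, gmax ε ∂(m a) := by
        intro a ha
        have he : ∫ ε, ε a ∂(m a) - (w' a / w a) * ∫ ε, ε a ∂(m a)
            = ((w a - w' a) / w a) * ∫ ε, ε a ∂(m a) := by
          rw [sub_div, div_self (hwpos a ha).ne']
          ring
        rw [he]
        refine mul_le_mul_of_nonneg_left ?_ (hratio_nonneg a ha)
        exact (le_abs_self _).trans (habs_int (m a) (hm.le_P a) a)
      have hB : ∀ b ∈ ndec, -(lam b * ∫ ε, ε b ∂r) ≤ lam b * ∫ ε, gmax ε ∂r := by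
        intro b hb
        rw [← mul_neg]
        refine mul_le_mul_of_nonneg_left ?_ (hlam_nonneg b hb)
        exact (neg_le_abs _).trans (habs_int r hr_le b)
      have hsA := Finset.sum_le_sum hA
      have hsB := Finset.sum_le_sum hB
      rw [Finset.sum_sub_distrib] at hsA
      have hsB2 : - ∑ b ∈ ndec, (lam b * ∫ ε, ε b ∂r) ≤ ∫ ε, gmax ε ∂r := by
        have e4 : ∑ b ∈ ndec, (lam b * ∫ ε, gmax ε ∂r) = ∫ ε, gmax ε ∂r := by
          rw [← Finset.sum_mul, hlam_sum, one_mul]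
        calc - ∑ b ∈ ndec, (lam b * ∫ ε, ε b ∂r) = ∑ b ∈ ndec, -(lam b * ∫ ε, ε b ∂r) := by
              rw [Finset.sum_neg_distrib]
          _ ≤ ∑ b ∈ ndec, (lam b * ∫ ε, gmax ε ∂r) := hsB
          _ = ∫ ε, gmax ε ∂r := e4
      have e5 : ∑ a ∈ dec, (((w a - w' a) / w a) * ∫ ε, gmax ε ∂(m a)) = ∫ ε, gmax ε ∂r :=
        hIgr.symm
      rw [e5] at hsA
      rw [hval_m, hval_m', Finset.sum_add_distrib]
      linarith
    have hS : MeasurableSet {ε : Option Y → ℝ | R < gmax ε} :=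
      measurableSet_lt measurable_const measurable_gmax
    haveI : IsFiniteMeasure r := ⟨by rw [hr_univ]; exact ENNReal.ofReal_lt_top⟩
    have hIgr_le : ∫ ε, gmax ε ∂r ≤ R * D + tailI P R := by
      have hdecomp : ∫ ε, gmax ε ∂r = (∫ ε in {ε | R < gmax ε}, gmax ε ∂r)
          + ∫ ε in {ε | R < gmax ε}ᶜ, gmax ε ∂r := (integral_add_compl hS hInt_r).symm
      have hle1 : (∫ ε in {ε | R < gmax ε}, gmax ε ∂r) ≤ tailI P R := by
        refine integral_mono_measure (Measure.restrict_mono (le_refl _) hr_le) ?_ hP.restrict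
        exact Filter.Eventually.of_forall (fun ε => gmax_nonneg ε)
      have hle2 : ∫ ε in {ε | R < gmax ε}ᶜ, gmax ε ∂r ≤ R * D := by
        have hb : ∫ ε in {ε | R < gmax ε}ᶜ, gmax ε ∂r ≤ ∫ _ε in {ε | R < gmax ε}ᶜ, R ∂r := by
          refine setIntegral_mono_on hInt_r.restrict (integrable_const R) hS.compl ?_
          intro ε hε
          rw [Set.mem_compl_iff, Set.mem_setOf_eq] at hε
          exact not_lt.mp hε
        rw [setIntegral_const, smul_eq_mul] at hb
        have hrc : (r {ε | R < gmax ε}ᶜ).toReal ≤ D := by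
          refine ENNReal.toReal_le_of_le_ofReal hD0 ?_
          exact (measure_mono (Set.subset_univ _)).trans hr_univ.le
        calc ∫ ε in {ε | R < gmax ε}ᶜ, gmax ε ∂r ≤ (r {ε | R < gmax ε}ᶜ).toReal * R := hb
          _ ≤ D * R := mul_le_mul_of_nonneg_right hrc hR
          _ = R * D := mul_comm _ _
      linarith
    refine ⟨m', ⟨hsum', hmass⟩, ?_⟩
    have hDle : D ≤ ∑ yo, |w yo - w' yo| := by
      refine (Finset.sum_le_sum (fun a _ => le_abs_self (w a - w' a))).trans ?_
      exact Finset.sum_le_sum_of_subset_of_nonneg (Finset.subset_univ _)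
        (fun _ _ _ => abs_nonneg _)
    have hmul := mul_le_mul_of_nonneg_left hDle hR
    linarith

end OT

section Argmax
variable {P : Measure (Option Y → ℝ)}

lemma abs_fmax_le' {ι : Type*} [Fintype ι] [Nonempty ι] (f : ι → ℝ) :
    |fmax f| ≤ fmax (fun i => |f i|) := by
  rw [abs_le]
  constructor
  · obtain ⟨i⟩ := (inferInstance : Nonempty ι)
    calc -fmax (fun i => |f i|) ≤ -|f i| := neg_le_neg (le_fmax (fun i => |f i|) i)
    _ ≤ f i := neg_abs_le _
    _ ≤ fmax f := le_fmax f i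
  · obtain ⟨i, hi⟩ := exists_fmax f
    rw [hi]
    exact (le_abs_self _).trans (le_fmax (fun i => |f i|) i)

lemma measurable_fmaxV (V : Option Y → ℝ) :
    Measurable (fun ε : Option Y → ℝ => fmax (fun yo => V yo + ε yo)) :=
  measurable_fmax fun yo => measurable_const.add (measurable_pi_apply yo)

lemma integrable_fmaxV {ρ : Measure (Option Y → ℝ)} [IsFiniteMeasure ρ]
    (hg : Integrable gmax ρ) (V : Option Y → ℝ) :
    Integrable (fun ε => fmax (fun yo => V yo + ε yo)) ρ := by
  refine ((integrable_const (fmax fun yo => |V yo|)).add hg).mono'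
    (measurable_fmaxV V).aestronglyMeasurable ?_
  filter_upwards with ε
  rw [Real.norm_eq_abs]
  refine (abs_fmax_le' _).trans (fmax_le fun yo => ?_)
  exact (abs_add_le _ _).trans (add_le_add (le_fmax (fun yo => |V yo|) yo) (abs_le_gmax ε yo))

lemma exists_feas_argmax [IsProbabilityMeasure P] (hP : Integrable gmax P)
    (V : Option Y → ℝ) :
    ∃ w m, simplexW w ∧ Feas P w m ∧
      (∑ yo, V yo * w yo) + valT m = ∫ ε, fmax (fun yo => V yo + ε yo) ∂P := by
  classical
  set N := Fintype.card (Option Y) with hN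
  set e : Option Y ≃ Fin N := Fintype.equivFin (Option Y) with he
  set f : Option Y → (Option Y → ℝ) → ℝ := fun yo ε => V yo + ε yo with hf
  set M : (Option Y → ℝ) → ℝ := fun ε => fmax (fun yo => f yo ε) with hM
  have hfmeas : ∀ yo, Measurable (f yo) := fun yo => measurable_const.add (measurable_pi_apply yo)
  have hMmeas : Measurable M := measurable_fmax hfmeas
  set A : Option Y → Set (Option Y → ℝ) := fun yo =>
    {ε | f yo ε = M ε} ∩ ⋂ j ∈ Finset.univ.filter (fun j : Fin N => j < e yo),
      {ε | f (e.symm j) ε ≠ M ε} with hA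
  have hAmeas : ∀ yo, MeasurableSet (A yo) := by
    intro yo
    refine (measurableSet_eq_fun (hfmeas yo) hMmeas).inter ?_
    refine MeasurableSet.biInter (Finset.countable_toSet _) fun j _ => ?_
    exact (measurableSet_eq_fun (hfmeas _) hMmeas).compl
  have hmem : ∀ (ε : Option Y → ℝ) (yo : Option Y), ε ∈ A yo ↔
      (f yo ε = M ε ∧ ∀ j : Fin N, j < e yo → f (e.symm j) ε ≠ M ε) := by
    intro ε yo
    rw [hA]
    simp only [Set.mem_inter_iff, Set.mem_setOf_eq, Set.mem_iInter, Finset.mem_filter,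
      Finset.mem_univ, true_and]
  -- cover and disjointness
  have hcover : ∀ ε : Option Y → ℝ, ∃! yo, ε ∈ A yo := by
    intro ε
    set s : Finset (Fin N) := Finset.univ.filter (fun j => f (e.symm j) ε = M ε) with hs
    have hsne : s.Nonempty := by
      obtain ⟨yo, hyo⟩ := exists_fmax (fun yo => f yo ε)
      exact ⟨e yo, by simp [hs, hM, ← hyo]⟩
    set j₀ := s.min' hsne with hj₀
    have hj₀s : j₀ ∈ s := s.min'_mem hsne
    refine ⟨e.symm j₀, ?_, ?_⟩
    · show ε ∈ A (e.symm j₀)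
      rw [hmem]
      constructor
      · rw [hs, Finset.mem_filter] at hj₀s
        exact hj₀s.2
      · intro j hj hfj
        rw [Equiv.apply_symm_apply] at hj
        exact absurd (s.min'_le j (by simp [hs, hfj])) (not_le.mpr hj)
    · intro yo hyo
      rw [hmem] at hyo
      have h1 : e yo ∈ s := by simp [hs, hyo.1]
      have h2 : j₀ ≤ e yo := s.min'_le _ h1
      rcases lt_or_eq_of_le h2 with h3 | h3
      · exfalso
        rw [hs, Finset.mem_filter] at hj₀s
        exact hyo.2 j₀ h3 hj₀s.2
      · rw [h3, Equiv.symm_apply_apply]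
  -- partition identity
  have hAdisj : ∀ yo yo', yo ≠ yo' → ∀ ε, ε ∈ A yo → ε ∈ A yo' → False := by
    intro yo yo' hne ε h h'
    obtain ⟨y₀, hy₀, huniq⟩ := hcover ε
    exact hne ((huniq yo h).trans (huniq yo' h').symm)
  have hpart : ∀ t : Set (Option Y → ℝ), MeasurableSet t → ∑ yo, P (t ∩ A yo) = P t := by
    intro t ht
    have hcup : ⋃ yo ∈ Finset.univ, (t ∩ A yo) = t := by
      ext ε
      simp only [Set.mem_iUnion, Set.mem_inter_iff, Finset.mem_univ, exists_true_left]
      constructor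
      · rintro ⟨yo, hε, _⟩
        exact hε
      · intro hε
        obtain ⟨yo, hyo, _⟩ := hcover ε
        exact ⟨yo, hε, hyo⟩
    have := measure_biUnion_finset (μ := P) (s := Finset.univ)
      (f := fun yo => t ∩ A yo) ?_ (fun yo _ => ht.inter (hAmeas yo))
    · rw [hcup] at this
      exact this.symm
    · intro yo _ yo' _ hne
      simp only [Function.onFun, Set.disjoint_left]
      intro ε hε hε'
      exact hAdisj yo yo' hne ε hε.2 hε'.2
  set m : Option Y → Measure (Option Y → ℝ) := fun yo => P.restrict (A yo) with hmdef
  set w : Option Y → ℝ := fun yo => (P (A yo)).toReal with hwdef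
  have hsum : ∑ yo, m yo = P := by
    ext t ht
    rw [Measure.finset_sum_apply]
    simp_rw [hmdef, Measure.restrict_apply ht]
    exact hpart t ht
  have hfeas : Feas P w m := by
    refine ⟨hsum, fun yo => ?_⟩
    rw [hmdef, Measure.restrict_apply MeasurableSet.univ, Set.univ_inter, hwdef,
      ENNReal.ofReal_toReal (measure_ne_top P _)]
  have hw : simplexW w := by
    constructor
    · intro yo
      exact ENNReal.toReal_nonneg
    · have h1 := hpart Set.univ MeasurableSet.univ
      simp only [Set.univ_inter, measure_univ] at h1
      rw [hwdef]
      rw [← ENNReal.toReal_one, ← h1, ENNReal.toReal_sum (fun yo _ => measure_ne_top P _)]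
  refine ⟨w, m, hw, hfeas, ?_⟩
  have hMint : Integrable M P := integrable_fmaxV hP V
  have hstep : ∀ yo, V yo * w yo + ∫ ε, ε yo ∂(m yo) = ∫ ε in A yo, M ε ∂P := by
    intro yo
    have hconst : ∫ (_ : Option Y → ℝ) in A yo, V yo ∂P = V yo * w yo := by
      rw [setIntegral_const, smul_eq_mul, hwdef, mul_comm]; rfl
    have hadd : ∫ ε in A yo, (V yo + ε yo) ∂P
        = (∫ (_ : Option Y → ℝ) in A yo, V yo ∂P) + ∫ ε in A yo, ε yo ∂P := by
      exact integral_add (integrable_const _)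
        (integrable_eval_of_le Measure.restrict_le_self hP yo)
    have hcongr : ∫ ε in A yo, (V yo + ε yo) ∂P = ∫ ε in A yo, M ε ∂P := by
      refine setIntegral_congr_fun (hAmeas yo) ?_
      intro ε hε
      exact ((hmem ε yo).mp hε).1
    rw [← hcongr, hadd, hconst, hmdef]
  rw [valT, ← Finset.sum_add_distrib]
  calc ∑ yo, (V yo * w yo + ∫ ε, ε yo ∂(m yo)) = ∑ yo, ∫ ε in A yo, M ε ∂P :=
        Finset.sum_congr rfl (fun yo _ => hstep yo)
    _ = ∫ ε, M ε ∂P := by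
        rw [← integral_finset_sum_measure (fun yo _ => hMint.restrict), hsum]
end Argmax

section Duality
variable {P : Measure (Option Y → ℝ)}

lemma hval_concave [IsProbabilityMeasure P] (hP : Integrable gmax P)
    {w1 w2 : Option Y → ℝ} (hw1 : simplexW w1) (hw2 : simplexW w2)
    {a b : ℝ} (ha : 0 ≤ a) (hb : 0 ≤ b) (hab : a + b = 1) :
    a * hval P w1 + b * hval P w2 ≤ hval P (fun yo => a * w1 yo + b * w2 yo) := by
  refine le_of_forall_pos_le_add ?_
  intro δ hδ
  have hne1 := TVals_nonempty (P := P) hw1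
  have hne2 := TVals_nonempty (P := P) hw2
  obtain ⟨v1, hv1S, hv1⟩ := exists_lt_of_lt_csSup hne1 (by linarith : hval P w1 - δ/2 < hval P w1)
  obtain ⟨v2, hv2S, hv2⟩ := exists_lt_of_lt_csSup hne2 (by linarith : hval P w2 - δ/2 < hval P w2)
  obtain ⟨m1, hm1, rfl⟩ := hv1S
  obtain ⟨m2, hm2, rfl⟩ := hv2S
  set mm : Option Y → Measure (Option Y → ℝ) := fun yo =>
    ENNReal.ofReal a • m1 yo + ENNReal.ofReal b • m2 yo with hmm
  have hfeas : Feas P (fun yo => a * w1 yo + b * w2 yo) mm := by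
    constructor
    · rw [hmm, Finset.sum_add_distrib, ← Finset.smul_sum, ← Finset.smul_sum, hm1.1, hm2.1,
        ← add_smul, ← ENNReal.ofReal_add ha hb, hab, ENNReal.ofReal_one, one_smul]
    · intro yo
      rw [hmm]
      simp only [Measure.add_apply, Measure.smul_apply, smul_eq_mul]
      rw [hm1.2 yo, hm2.2 yo, ← ENNReal.ofReal_mul ha, ← ENNReal.ofReal_mul hb,
        ← ENNReal.ofReal_add (mul_nonneg ha (hw1.1 yo)) (mul_nonneg hb (hw2.1 yo))]
  have hval_mm : valT mm = a * valT m1 + b * valT m2 := by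
    rw [valT, valT, valT, Finset.mul_sum, Finset.mul_sum, ← Finset.sum_add_distrib]
    refine Finset.sum_congr rfl fun yo _ => ?_
    rw [hmm]
    rw [integral_add_measure
      ((integrable_eval_of_le (hm1.le_P yo) hP yo).smul_measure ENNReal.ofReal_ne_top)
      ((integrable_eval_of_le (hm2.le_P yo) hP yo).smul_measure ENNReal.ofReal_ne_top),
      integral_smul_measure, integral_smul_measure, ENNReal.toReal_ofReal ha,
      ENNReal.toReal_ofReal hb, smul_eq_mul, smul_eq_mul]
  have hle := le_hval hP hfeas
  rw [hval_mm] at hle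
  have e1 : a * (hval P w1 - δ/2) ≤ a * valT m1 := mul_le_mul_of_nonneg_left hv1.le ha
  have e2 : b * (hval P w2 - δ/2) ≤ b * valT m2 := mul_le_mul_of_nonneg_left hv2.le hb
  nlinarith

lemma hval_move [IsProbabilityMeasure P] (hP : Integrable gmax P)
    {w w' : Option Y → ℝ} (hw : simplexW w) (hw' : simplexW w') {R : ℝ} (hR : 0 ≤ R) :
    hval P w ≤ hval P w' + 2 * (R * ∑ yo, |w yo - w' yo| + tailI P R) := by
  refine hval_le hP (TVals_nonempty hw) (fun m hm => ?_)
  obtain ⟨m', hm', hle⟩ := realloc hP hw hw' hm hR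
  have := le_hval hP hm'
  linarith

lemma strong_dual [IsProbabilityMeasure P] (hP : Integrable gmax P) {ν : Option Y → ℝ}
    (hν : simplexW ν) {c : ℝ} (hc : 0 < c) :
    ∃ V : Option Y → ℝ,
      (∫ ε, fmax (fun yo => V yo + ε yo) ∂P) - ∑ yo, V yo * ν yo < hval P ν + c := by
  classical
  set K : Set ((Option Y → ℝ) × ℝ) := {p | simplexW p.1 ∧ p.2 ≤ hval P p.1} with hK
  have hKconv : Convex ℝ K := by
    rintro ⟨w1, t1⟩ ⟨hw1, ht1⟩ ⟨w2, t2⟩ ⟨hw2, ht2⟩ a b ha hb hab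
    constructor
    · constructor
      · intro yo
        have := hw1.1 yo
        have := hw2.1 yo
        simp only [Prod.fst_add, Prod.smul_fst, Pi.add_apply, Pi.smul_apply, smul_eq_mul]
        nlinarith
      · simp only [Prod.fst_add, Prod.smul_fst, Pi.add_apply, Pi.smul_apply, smul_eq_mul]
        rw [Finset.sum_add_distrib, ← Finset.mul_sum, ← Finset.mul_sum, hw1.2, hw2.2]
        linarith
    · have hcc := hval_concave hP hw1 hw2 ha hb hab
      have e1 : a * t1 + b * t2 ≤ a * hval P w1 + b * hval P w2 := by
        have := mul_le_mul_of_nonneg_left ht1 ha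
        have := mul_le_mul_of_nonneg_left ht2 hb
        linarith
      refine e1.trans (hcc.trans (le_of_eq ?_))
      congr 1
  have hKclosed : IsClosed K := by
    refine IsSeqClosed.isClosed ?_
    intro x p hxK hlim
    have hfst : Filter.Tendsto (fun n => (x n).1) Filter.atTop (nhds p.1) :=
      (continuous_fst.tendsto p).comp hlim
    have hsnd : Filter.Tendsto (fun n => (x n).2) Filter.atTop (nhds p.2) :=
      (continuous_snd.tendsto p).comp hlim
    have heval : ∀ yo, Filter.Tendsto (fun n => (x n).1 yo) Filter.atTop (nhds (p.1 yo)) :=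
      fun yo => ((continuous_apply yo).tendsto p.1).comp hfst
    have hp1 : simplexW p.1 := by
      constructor
      · intro yo
        exact le_of_tendsto_of_tendsto' tendsto_const_nhds (heval yo) (fun n => (hxK n).1.1 yo)
      · have hsum : Filter.Tendsto (fun n => ∑ yo, (x n).1 yo) Filter.atTop
            (nhds (∑ yo, p.1 yo)) := tendsto_finset_sum _ (fun yo _ => heval yo)
        have hconst : ∀ n, ∑ yo, (x n).1 yo = 1 := fun n => (hxK n).1.2
        simp_rw [hconst] at hsum
        exact tendsto_nhds_unique hsum tendsto_const_nhds
    refine ⟨hp1, ?_⟩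
    refine le_of_forall_pos_le_add ?_
    intro δ hδ
    obtain ⟨R, hR0, hRtail⟩ := exists_tail_small hP (by linarith : (0:ℝ) < δ/4)
    have hdist : Filter.Tendsto (fun n => ∑ yo, |(x n).1 yo - p.1 yo|) Filter.atTop
        (nhds 0) := by
      have : Filter.Tendsto (fun n => ∑ yo, |(x n).1 yo - p.1 yo|) Filter.atTop
          (nhds (∑ yo, |p.1 yo - p.1 yo|)) :=
        tendsto_finset_sum _ (fun yo _ => (((heval yo).sub tendsto_const_nhds).abs))
      simpa using this
    have hbnd : ∀ n, (x n).2 ≤ hval P p.1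
        + 2 * (R * ∑ yo, |(x n).1 yo - p.1 yo| + tailI P R) := by
      intro n
      exact (hxK n).2.trans (hval_move hP (hxK n).1 hp1 hR0)
    have hrhs : Filter.Tendsto (fun n => hval P p.1
        + 2 * (R * ∑ yo, |(x n).1 yo - p.1 yo| + tailI P R)) Filter.atTop
        (nhds (hval P p.1 + 2 * (R * 0 + tailI P R))) := by
      refine tendsto_const_nhds.add (Filter.Tendsto.const_mul _ ?_)
      have h5 : Filter.Tendsto (fun n => R * ∑ yo, |(x n).1 yo - p.1 yo|) Filter.atTop
          (nhds (R * 0)) := hdist.const_mul R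
      exact h5.add tendsto_const_nhds
    have := le_of_tendsto_of_tendsto' hsnd hrhs hbnd
    have htail0 := tailI_nonneg (P := P) R
    linarith
  have hxK : (ν, hval P ν + c) ∉ K := by
    rintro ⟨-, h2⟩
    simp only at h2
    linarith
  obtain ⟨φ, u, hφK, hφx⟩ := geometric_hahn_banach_closed_point hKconv hKclosed hxK
  set s : ℝ := φ ((0 : Option Y → ℝ), (1:ℝ)) with hs
  have hlin : ∀ p : (Option Y → ℝ) × ℝ, φ p = φ (p.1, 0) + p.2 * s := by
    intro p
    have hp : p = (p.1, (0:ℝ)) + p.2 • ((0 : Option Y → ℝ), (1:ℝ)) := by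
      apply Prod.ext
      · simp
      · simp
    calc φ p = φ ((p.1, (0:ℝ)) + p.2 • ((0 : Option Y → ℝ), (1:ℝ))) := by rw [← hp]
      _ = φ (p.1, 0) + p.2 * s := by rw [map_add, _root_.map_smul, smul_eq_mul, hs]
  have hKmem : ∀ w m, simplexW w → Feas P w m → φ (w, 0) + valT m * s < u := by
    intro w m hw hm
    have : (w, valT m) ∈ K := ⟨hw, le_hval hP hm⟩
    have := hφK _ this
    rwa [hlin (w, valT m)] at this
  have hs_pos : 0 < s := by
    rcases lt_trichotomy s 0 with hneg | hzero | hpos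
    · exfalso
      set t : ℝ := min (hval P ν) ((u - φ (ν, 0)) / s) with ht
      have htK : (ν, t) ∈ K := ⟨hν, min_le_left _ _⟩
      have := hφK _ htK
      rw [hlin (ν, t)] at this
      simp only at this
      have h2 : t ≤ (u - φ (ν, 0)) / s := min_le_right _ _
      have h3 : u - φ (ν, 0) ≤ t * s := by
        have := mul_le_mul_of_nonpos_right h2 hneg.le
        calc u - φ (ν, 0) = ((u - φ (ν, 0)) / s) * s := (div_mul_cancel₀ _ hneg.ne).symm
          _ ≤ t * s := by nlinarith
      linarith
    · exfalso
      have h1 : (ν, hval P ν) ∈ K := ⟨hν, le_refl _⟩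
      have h2 := hφK _ h1
      rw [hlin (ν, hval P ν)] at h2
      rw [hlin (ν, hval P ν + c)] at hφx
      rw [hzero, mul_zero, add_zero] at h2
      rw [hzero, mul_zero, add_zero] at hφx
      linarith
    · exact hpos
  have hφw : ∀ w : Option Y → ℝ,
      φ (w, 0) = ∑ yo, w yo * φ ((Pi.single yo 1 : Option Y → ℝ), (0:ℝ)) := by
    intro w
    have hrep : (w, (0:ℝ)) = ∑ yo, w yo • ((Pi.single yo 1 : Option Y → ℝ), (0:ℝ)) := by
      apply Prod.ext
      · rw [Prod.fst_sum]
        simp only [Prod.smul_fst]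
        funext x
        rw [Finset.sum_apply]
        simp [Pi.single_apply]
      · rw [Prod.snd_sum]
        simp
    rw [hrep, map_sum]
    refine Finset.sum_congr rfl fun yo _ => ?_
    rw [_root_.map_smul, smul_eq_mul]
  set V : Option Y → ℝ := fun yo => φ ((Pi.single yo 1 : Option Y → ℝ), (0:ℝ)) / s with hV
  have hVs : ∀ yo, φ ((Pi.single yo 1 : Option Y → ℝ), (0:ℝ)) = V yo * s := by
    intro yo
    rw [hV]
    field_simp
  obtain ⟨w, m, hw, hfeas, heq⟩ := exists_feas_argmax hP V
  have h1 := hKmem w m hw hfeas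
  rw [hφw w] at h1
  have e6 : ∑ yo, w yo * φ ((Pi.single yo 1 : Option Y → ℝ), (0:ℝ))
      = (∑ yo, V yo * w yo) * s := by
    rw [Finset.sum_mul]
    refine Finset.sum_congr rfl fun yo _ => ?_
    rw [hVs yo]
    ring
  rw [e6] at h1
  have h2 : (∑ yo, V yo * w yo) + valT m < u / s := by
    rw [lt_div_iff₀ hs_pos]
    nlinarith
  rw [heq] at h2
  rw [hlin (ν, hval P ν + c), hφw ν] at hφx
  have e7 : ∑ yo, ν yo * φ ((Pi.single yo 1 : Option Y → ℝ), (0:ℝ))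
      = (∑ yo, V yo * ν yo) * s := by
    rw [Finset.sum_mul]
    refine Finset.sum_congr rfl fun yo _ => ?_
    rw [hVs yo]
    ring
  rw [e7] at hφx
  have hφx' : u < (∑ yo, V yo * ν yo) * s + (hval P ν + c) * s := by simpa using hφx
  have h3 : u / s < (∑ yo, V yo * ν yo) + (hval P ν + c) := by
    rw [div_lt_iff₀ hs_pos]
    nlinarith
  refine ⟨V, ?_⟩
  have h4 := h2.trans h3
  linarith
end Duality

section Couplings
variable {P : Measure (Option Y → ℝ)}

lemma measurable_eval2 : Measurable (fun p : Option Y × (Option Y → ℝ) => p.2 p.1) := by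
  classical
  have hrep : (fun p : Option Y × (Option Y → ℝ) => p.2 p.1)
      = fun p => ∑ yo, if p.1 = yo then p.2 yo else 0 := by
    funext p
    rw [Finset.sum_ite_eq]
    simp
  rw [hrep]
  refine Finset.measurable_sum _ fun yo _ => Measurable.ite ?_ ?_ measurable_const
  · have : {p : Option Y × (Option Y → ℝ) | p.1 = yo} = Prod.fst ⁻¹' {yo} := rfl
    rw [this]
    exact measurable_fst (MeasurableSpace.measurableSet_top)
  · exact (measurable_pi_apply yo).comp measurable_snd

lemma integrable_comp_snd {π : Measure (Option Y × (Option Y → ℝ))}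
    (hsnd : π.map Prod.snd = P) (hP : Integrable gmax P) :
    Integrable (fun p : Option Y × (Option Y → ℝ) => gmax p.2) π := by
  have := (integrable_map_measure (measurable_gmax.aestronglyMeasurable)
    measurable_snd.aemeasurable).mp (by rwa [hsnd])
  exact this

lemma integrable_eval2 {π : Measure (Option Y × (Option Y → ℝ))}
    (hsnd : π.map Prod.snd = P) (hP : Integrable gmax P) :
    Integrable (fun p : Option Y × (Option Y → ℝ) => p.2 p.1) π := by
  refine (integrable_comp_snd hsnd hP).mono' measurable_eval2.aestronglyMeasurable ?_
  filter_upwards with p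
  rw [Real.norm_eq_abs]
  exact abs_le_gmax p.2 p.1

lemma tuple_to_coupling [IsProbabilityMeasure P] (hP : Integrable gmax P)
    {w : Option Y → ℝ} {m} (hw : simplexW w) (hm : Feas P w m) :
    ∃ π : Measure (Option Y × (Option Y → ℝ)), IsProbabilityMeasure π ∧
      π.map Prod.fst = ∑ yo, ENNReal.ofReal (w yo) • Measure.dirac yo ∧
      π.map Prod.snd = P ∧ ∫ p, p.2 p.1 ∂π = valT m := by
  classical
  haveI hfin : ∀ yo, IsFiniteMeasure (m yo) := fun yo =>
    ⟨by rw [hm.2 yo]; exact ENNReal.ofReal_lt_top⟩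
  set π : Measure (Option Y × (Option Y → ℝ)) :=
    ∑ yo, (Measure.dirac yo).prod (m yo) with hπ
  have hπs : ∀ t : Set (Option Y × (Option Y → ℝ)), MeasurableSet t →
      π t = ∑ yo, ((Measure.dirac yo).prod (m yo)) t := by
    intro t ht
    rw [hπ, Measure.finset_sum_apply]
  have hprodapp : ∀ (yo : Option Y) (s₁ : Set (Option Y)) (s₂ : Set (Option Y → ℝ)),
      MeasurableSet s₁ → MeasurableSet s₂ →
      ((Measure.dirac yo).prod (m yo)) (s₁ ×ˢ s₂) = (Measure.dirac yo) s₁ * (m yo) s₂ :=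
    fun yo s₁ s₂ h₁ h₂ => Measure.prod_prod s₁ s₂
  have hmap_fst : π.map Prod.fst = ∑ yo, ENNReal.ofReal (w yo) • Measure.dirac yo := by
    ext s hs
    rw [Measure.map_apply measurable_fst hs]
    have hpre : (Prod.fst ⁻¹' s : Set (Option Y × (Option Y → ℝ))) = s ×ˢ Set.univ := by
      ext p
      simp [Set.mem_prod]
    rw [hpre, hπs _ ((hs.prod MeasurableSet.univ)), Measure.finset_sum_apply]
    refine Finset.sum_congr rfl fun yo _ => ?_
    rw [hprodapp yo s Set.univ hs MeasurableSet.univ, hm.2 yo, Measure.smul_apply,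
      smul_eq_mul, mul_comm]
  have hmap_snd : π.map Prod.snd = P := by
    ext s hs
    rw [Measure.map_apply measurable_snd hs]
    have hpre : (Prod.snd ⁻¹' s : Set (Option Y × (Option Y → ℝ))) = Set.univ ×ˢ s := by
      ext p
      simp [Set.mem_prod]
    rw [hpre, hπs _ (MeasurableSet.univ.prod hs)]
    have : ∀ yo : Option Y, ((Measure.dirac yo).prod (m yo)) (Set.univ ×ˢ s) = m yo s := by
      intro yo
      rw [hprodapp yo Set.univ s MeasurableSet.univ hs]
      simp
    rw [Finset.sum_congr rfl (fun yo _ => this yo), ← Measure.finset_sum_apply, hm.1]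
  haveI hπprob : IsProbabilityMeasure π := by
    constructor
    rw [← Set.preimage_univ (f := Prod.snd), ← Measure.map_apply measurable_snd
      MeasurableSet.univ, hmap_snd]
    exact measure_univ
  have hint : ∀ yo : Option Y, Integrable (fun p : Option Y × (Option Y → ℝ) => p.2 p.1)
      ((Measure.dirac yo).prod (m yo)) := by
    intro yo
    have hsnd' : ((Measure.dirac yo).prod (m yo)).map Prod.snd = m yo := by
      rw [Measure.map_snd_prod]
      simp
    have hg : Integrable (fun p : Option Y × (Option Y → ℝ) => gmax p.2)
        ((Measure.dirac yo).prod (m yo)) :=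
      integrable_comp_snd (P := m yo) hsnd' (integrable_gmax_of_le (hm.le_P yo) hP)
    refine hg.mono' measurable_eval2.aestronglyMeasurable ?_
    filter_upwards with p
    rw [Real.norm_eq_abs]
    exact abs_le_gmax p.2 p.1
  have hval : ∫ p, p.2 p.1 ∂π = valT m := by
    rw [hπ, integral_finset_sum_measure (fun yo _ => hint yo), valT]
    refine Finset.sum_congr rfl fun yo _ => ?_
    rw [integral_prod _ (hint yo)]
    rw [integral_dirac]
  exact ⟨π, hπprob, hmap_fst, hmap_snd, hval⟩

lemma coupling_to_tuple [IsProbabilityMeasure P] (hP : Integrable gmax P)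
    {w : Option Y → ℝ} (hw : ∀ yo, 0 ≤ w yo) {π : Measure (Option Y × (Option Y → ℝ))}
    [IsProbabilityMeasure π]
    (hfst : π.map Prod.fst = ∑ yo, ENNReal.ofReal (w yo) • Measure.dirac yo)
    (hsnd : π.map Prod.snd = P) :
    ∃ m, Feas P w m ∧ valT m = ∫ p, p.2 p.1 ∂π := by
  classical
  set A : Option Y → Set (Option Y × (Option Y → ℝ)) := fun yo => {yo} ×ˢ Set.univ with hA
  have hAmeas : ∀ yo, MeasurableSet (A yo) :=
    fun yo => (MeasurableSpace.measurableSet_top).prod MeasurableSet.univ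
  set m : Option Y → Measure (Option Y → ℝ) :=
    fun yo => (π.restrict (A yo)).map Prod.snd with hm
  have hpart : ∀ t : Set (Option Y × (Option Y → ℝ)), MeasurableSet t →
      ∑ yo, π (t ∩ A yo) = π t := by
    intro t ht
    have hcup : ⋃ yo ∈ Finset.univ, (t ∩ A yo) = t := by
      ext p
      simp only [Set.mem_iUnion, Set.mem_inter_iff, Finset.mem_univ, exists_true_left, hA,
        Set.mem_prod, Set.mem_singleton_iff, Set.mem_univ, and_true]
      constructor
      · rintro ⟨yo, hp, -⟩
        exact hp
      · intro hp
        exact ⟨p.1, hp, rfl⟩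
    have := measure_biUnion_finset (μ := π) (s := Finset.univ)
      (f := fun yo => t ∩ A yo) ?_ (fun yo _ => ht.inter (hAmeas yo))
    · rw [hcup] at this
      exact this.symm
    · intro yo _ yo' _ hne
      simp only [Function.onFun, Set.disjoint_left]
      rintro p hp hp'
      apply hne
      have h1 : p.1 = yo := by
        have := hp.2
        simp only [hA, Set.mem_prod, Set.mem_singleton_iff] at this
        exact this.1
      have h2 : p.1 = yo' := by
        have := hp'.2
        simp only [hA, Set.mem_prod, Set.mem_singleton_iff] at this
        exact this.1
      rw [← h1, ← h2]
  have hsum : ∑ yo, m yo = P := by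
    ext s hs
    rw [Measure.finset_sum_apply, ← hsnd, Measure.map_apply measurable_snd hs]
    have : ∀ yo : Option Y, m yo s = π ((Prod.snd ⁻¹' s) ∩ A yo) := by
      intro yo
      rw [hm, Measure.map_apply measurable_snd hs,
        Measure.restrict_apply (measurable_snd hs)]
    rw [Finset.sum_congr rfl (fun yo _ => this yo)]
    exact hpart _ (measurable_snd hs)
  have hmass : ∀ yo, m yo Set.univ = ENNReal.ofReal (w yo) := by
    intro yo
    rw [hm, Measure.map_apply measurable_snd MeasurableSet.univ, Set.preimage_univ,
      Measure.restrict_apply MeasurableSet.univ, Set.univ_inter]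
    have h1 : A yo = Prod.fst ⁻¹' {yo} := by
      ext p
      constructor
      · intro hp
        exact (Set.mem_prod.mp hp).1
      · intro hp
        exact Set.mem_prod.mpr ⟨hp, Set.mem_univ _⟩
    rw [h1, ← Measure.map_apply measurable_fst (MeasurableSpace.measurableSet_top), hfst,
      Measure.finset_sum_apply]
    rw [Finset.sum_eq_single yo]
    · rw [Measure.smul_apply, smul_eq_mul, Measure.dirac_apply_of_mem (Set.mem_singleton yo),
        mul_one]
    · intro yo' _ hne
      rw [Measure.smul_apply, smul_eq_mul, Measure.dirac_apply' _
        (MeasurableSpace.measurableSet_top)]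
      rw [Set.indicator_of_notMem (by simpa using hne)]
      rw [mul_zero]
    · intro h
      exact absurd (Finset.mem_univ yo) h
  have hfeas : Feas P w m := ⟨hsum, hmass⟩
  have hrle : ∀ yo, π.restrict (A yo) ≤ π := fun yo => Measure.restrict_le_self
  have hintπ : Integrable (fun p : Option Y × (Option Y → ℝ) => p.2 p.1) π :=
    integrable_eval2 hsnd hP
  have hval : valT m = ∫ p, p.2 p.1 ∂π := by
    rw [valT]
    have hstep : ∀ yo, ∫ ε, ε yo ∂(m yo) = ∫ p in A yo, p.2 p.1 ∂π := by
      intro yo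
      have e1 : ∫ ε, ε yo ∂(m yo) = ∫ p, p.2 yo ∂(π.restrict (A yo)) :=
        integral_map measurable_snd.aemeasurable
          (measurable_pi_apply yo).aestronglyMeasurable
      rw [e1]
      refine setIntegral_congr_fun (hAmeas yo) ?_
      intro p hp
      have : p.1 = yo := by
        simp only [hA, Set.mem_prod, Set.mem_singleton_iff] at hp
        exact hp.1
      simp [this]
    rw [Finset.sum_congr rfl (fun yo _ => hstep yo)]
    have hresum : ∑ yo, π.restrict (A yo) = π := by
      ext t ht
      rw [Measure.finset_sum_apply]
      simp_rw [Measure.restrict_apply ht]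
      exact hpart t ht
    rw [← integral_finset_sum_measure (fun yo _ => hintπ.restrict), hresum]
  exact ⟨m, hfeas, hval⟩

lemma weak_duality_tuple [IsProbabilityMeasure P] (hP : Integrable gmax P)
    {w : Option Y → ℝ} (hw : simplexW w) {m} (hm : Feas P w m) (W : Option Y → ℝ) :
    valT m ≤ (∫ ε, fmax (fun yo => W yo + ε yo) ∂P) - ∑ yo, W yo * w yo := by
  haveI hfin : ∀ yo, IsFiniteMeasure (m yo) := fun yo =>
    ⟨by rw [hm.2 yo]; exact ENNReal.ofReal_lt_top⟩
  have hstep : ∀ yo, ∫ ε, ε yo ∂(m yo)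
      ≤ (∫ ε, fmax (fun yo' => W yo' + ε yo') ∂(m yo)) - W yo * w yo := by
    intro yo
    have hpt : ∀ ε : Option Y → ℝ, ε yo ≤ fmax (fun yo' => W yo' + ε yo') - W yo := by
      intro ε
      have := le_fmax (fun yo' => W yo' + ε yo') yo
      linarith
    have hint1 : Integrable (fun ε => fmax (fun yo' => W yo' + ε yo')) (m yo) :=
      integrable_fmaxV (integrable_gmax_of_le (hm.le_P yo) hP) W
    have hml := integral_mono (integrable_eval_of_le (hm.le_P yo) hP yo)
      (hint1.sub (integrable_const (W yo))) hpt
    have hmr : ((m yo) Set.univ).toReal = w yo := by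
      rw [hm.2 yo, ENNReal.toReal_ofReal (hw.1 yo)]
    have hsub : ∫ ε, (fmax (fun yo' => W yo' + ε yo') - W yo) ∂(m yo)
        = (∫ ε, fmax (fun yo' => W yo' + ε yo') ∂(m yo)) - W yo * w yo := by
      rw [integral_sub hint1 (integrable_const _), integral_const, Measure.real, hmr, smul_eq_mul, mul_comm]
    exact hml.trans_eq hsub
  have hsumint : ∑ yo, ∫ ε, fmax (fun yo' => W yo' + ε yo') ∂(m yo)
      = ∫ ε, fmax (fun yo' => W yo' + ε yo') ∂P := by
    rw [← integral_finset_sum_measure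
      (fun yo _ => integrable_fmaxV (integrable_gmax_of_le (hm.le_P yo) hP) W), hm.1]
  calc valT m ≤ ∑ yo, ((∫ ε, fmax (fun yo' => W yo' + ε yo') ∂(m yo)) - W yo * w yo) :=
        Finset.sum_le_sum fun yo _ => hstep yo
    _ = (∫ ε, fmax (fun yo' => W yo' + ε yo') ∂P) - ∑ yo, W yo * w yo := by
        rw [Finset.sum_sub_distrib, hsumint]
end Couplings




/-- **Characterization of the generalized entropy of choice (Theorem 1).**
`−G*(μ)` is the value of the optimal transport problem between the distribution
`(μ₀, μ)` on `𝒴₀` and the distribution `P` of `ε`, for the surplus `ε_ŷ`. -/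
theorem entropy_is_optimal_transport
    (P : Measure (Option Y → ℝ)) [IsProbabilityMeasure P]
    (hP : Integrable (fun ε => fmax (fun yo => |ε yo|)) P)
    (μ : Y → ℝ) (hμ : ∀ y, 0 ≤ μ y) (hsum : ∑ y, μ y ≤ 1)
    -- the probability measure `ν` on `𝒴₀` with `ν {some y} = μ y`, `ν {none} = 1 − Σ μ`
    (ν : Measure (Option Y))
    (hν : ν = ∑ yo : Option Y,
      ENNReal.ofReal (yo.elim (1 - ∑ y, μ y) μ) • Measure.dirac yo) :
    -(EmaxStar P μ) =
      ⨆ π : {π : Measure (Option Y × (Option Y → ℝ)) //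
          IsProbabilityMeasure π ∧ π.map Prod.fst = ν ∧ π.map Prod.snd = P},
        ((∫ p, p.2 p.1 ∂(π : Measure (Option Y × (Option Y → ℝ))) : ℝ) : EReal) := by
  classical
  have hgP : Integrable gmax P := hP
  set wν : Option Y → ℝ := fun yo => yo.elim (1 - ∑ y, μ y) μ with hwνdef
  have hsimp : simplexW wν := by
    constructor
    · intro yo
      cases yo with
      | none => simpa [hwνdef] using by linarith
      | some y => simpa [hwνdef] using hμ y
    · rw [hwνdef, Fintype.sum_option]
      simp only [Option.elim]
      ring
  set S₀ : ℝ := hval P wν with hS₀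
  -- Claim A : every coupling value is ≤ S₀
  have hA : ∀ π : {π : Measure (Option Y × (Option Y → ℝ)) //
      IsProbabilityMeasure π ∧ π.map Prod.fst = ν ∧ π.map Prod.snd = P},
      (∫ p, p.2 p.1 ∂(π : Measure (Option Y × (Option Y → ℝ)))) ≤ S₀ := by
    rintro ⟨π, hprob, hfst, hsnd⟩
    haveI := hprob
    have hfst' : π.map Prod.fst = ∑ yo, ENNReal.ofReal (wν yo) • Measure.dirac yo := by
      rw [hfst, hν]
    obtain ⟨m, hm, hvm⟩ := coupling_to_tuple hgP hsimp.1 hfst' hsnd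
    rw [← hvm]
    exact le_hval hgP hm
  -- Claim B : every tuple value is a coupling value
  have hB : ∀ m, Feas P wν m → ∃ π : {π : Measure (Option Y × (Option Y → ℝ)) //
      IsProbabilityMeasure π ∧ π.map Prod.fst = ν ∧ π.map Prod.snd = P},
      (∫ p, p.2 p.1 ∂(π : Measure (Option Y × (Option Y → ℝ)))) = valT m := by
    intro m hm
    obtain ⟨π, hprob, hfst, hsnd, hvm⟩ := tuple_to_coupling hgP hsimp hm
    exact ⟨⟨π, hprob, by rw [hfst, hν], hsnd⟩, hvm⟩
  -- nonempty index
  obtain ⟨v₀, m₀, hm₀, hv₀⟩ : ∃ v m, Feas P wν m ∧ valT m = v := by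
    obtain ⟨v, m, hm, hv⟩ := TVals_nonempty (P := P) hsimp
    exact ⟨v, m, hm, hv⟩
  obtain ⟨π₀, hπ₀⟩ := hB m₀ hm₀
  -- Claim D : weak duality
  have hD : ∀ U : Y → ℝ, S₀ ≤ Emax P U - ∑ y, μ y * U y := by
    intro U
    refine hval_le hgP (TVals_nonempty hsimp) (fun m hm => ?_)
    have hwd := weak_duality_tuple hgP hsimp hm (optExt U)
    have e1 : ∑ yo, optExt U yo * wν yo = ∑ y, μ y * U y := by
      rw [Fintype.sum_option]
      simp [optExt, hwνdef, mul_comm]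
    rw [e1] at hwd
    exact hwd
  -- Claim E : strong duality
  have hE : ∀ c : ℝ, 0 < c → ∃ U : Y → ℝ, Emax P U - ∑ y, μ y * U y < S₀ + c := by
    intro c hc
    obtain ⟨V, hV⟩ := strong_dual hgP hsimp hc
    set U : Y → ℝ := fun y => V (some y) - V none with hU
    refine ⟨U, ?_⟩
    have hopt : ∀ yo, optExt U yo = V yo - V none := by
      intro yo
      cases yo with
      | none => simp [optExt]
      | some y => simp [optExt, hU]
    have hpt : ∀ ε : Option Y → ℝ, fmax (fun yo => optExt U yo + ε yo)
        = fmax (fun yo => V yo + ε yo) - V none := by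
      intro ε
      have e2 : (fun yo => optExt U yo + ε yo) = fun yo => (V yo + ε yo) + (-(V none)) := by
        funext yo
        rw [hopt yo]
        ring
      rw [e2, fmax_add_const]
      ring
    have hEm : Emax P U = (∫ ε, fmax (fun yo => V yo + ε yo) ∂P) - V none := by
      rw [Emax]
      simp_rw [hpt]
      rw [integral_sub (integrable_fmaxV hgP V) (integrable_const _), integral_const]
      simp
    have hsum1 : ∑ y, μ y * U y = (∑ y, μ y * V (some y)) - (∑ y, μ y) * V none := by
      rw [hU, Finset.sum_mul, ← Finset.sum_sub_distrib]
      refine Finset.sum_congr rfl fun y _ => ?_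
      ring
    have hsum2 : ∑ yo, V yo * wν yo
        = V none * (1 - ∑ y, μ y) + ∑ y, μ y * V (some y) := by
      rw [Fintype.sum_option]
      simp only [hwνdef, Option.elim]
      congr 1
      refine Finset.sum_congr rfl fun y _ => ?_
      ring
    rw [hEm, hsum1]
    rw [hsum2] at hV
    linarith
  -- identify the RHS supremum with S₀
  have hRHS : (⨆ π : {π : Measure (Option Y × (Option Y → ℝ)) //
      IsProbabilityMeasure π ∧ π.map Prod.fst = ν ∧ π.map Prod.snd = P},
        ((∫ p, p.2 p.1 ∂(π : Measure (Option Y × (Option Y → ℝ))) : ℝ) : EReal))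
      = ((S₀ : ℝ) : EReal) := by
    apply le_antisymm
    · exact iSup_le fun π => EReal.coe_le_coe_iff.mpr (hA π)
    · by_contra hcon
      rw [not_le] at hcon
      have hgt : (⊥ : EReal) < ⨆ π : {π : Measure (Option Y × (Option Y → ℝ)) //
          IsProbabilityMeasure π ∧ π.map Prod.fst = ν ∧ π.map Prod.snd = P},
          ((∫ p, p.2 p.1 ∂(π : Measure (Option Y × (Option Y → ℝ))) : ℝ) : EReal) :=
        lt_of_lt_of_le (by exact EReal.bot_lt_coe _) (le_iSup _ π₀)
      obtain ⟨b, hb⟩ : ∃ b : ℝ, (⨆ π : {π : Measure (Option Y × (Option Y → ℝ)) //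
          IsProbabilityMeasure π ∧ π.map Prod.fst = ν ∧ π.map Prod.snd = P},
          ((∫ p, p.2 p.1 ∂(π : Measure (Option Y × (Option Y → ℝ))) : ℝ) : EReal)) = (b : EReal) :=
        ⟨_, (EReal.coe_toReal (ne_top_of_lt hcon) hgt.ne').symm⟩
      rw [hb] at hcon
      have hbS : b < S₀ := EReal.coe_lt_coe_iff.mp hcon
      obtain ⟨v, hvS, hvgt⟩ := exists_lt_of_lt_csSup
        (TVals_nonempty (P := P) hsimp) (show b < sSup (TVals P wν) from hbS)
      obtain ⟨m, hm, rfl⟩ := hvS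
      obtain ⟨π, hπ⟩ := hB m hm
      have := le_iSup (fun π : {π : Measure (Option Y × (Option Y → ℝ)) //
          IsProbabilityMeasure π ∧ π.map Prod.fst = ν ∧ π.map Prod.snd = P} =>
          ((∫ p, p.2 p.1 ∂(π : Measure (Option Y × (Option Y → ℝ))) : ℝ) : EReal)) π
      rw [hb, hπ] at this
      have := EReal.coe_le_coe_iff.mp this
      linarith
  -- identify EmaxStar with -S₀
  have hLHS : EmaxStar P μ = ((-S₀ : ℝ) : EReal) := by
    apply le_antisymm
    · refine iSup_le fun U => EReal.coe_le_coe_iff.mpr ?_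
      have := hD U
      linarith
    · by_contra hcon
      rw [not_le] at hcon
      have hgt : (⊥ : EReal) < EmaxStar P μ :=
        lt_of_lt_of_le (EReal.bot_lt_coe _) (le_iSup (fun U : Y → ℝ =>
          (((∑ y, μ y * U y) - Emax P U : ℝ) : EReal)) 0)
      obtain ⟨b, hb⟩ : ∃ b : ℝ, EmaxStar P μ = (b : EReal) :=
        ⟨_, (EReal.coe_toReal (ne_top_of_lt hcon) hgt.ne').symm⟩
      rw [hb] at hcon
      have hbS : b < -S₀ := EReal.coe_lt_coe_iff.mp hcon
      obtain ⟨U, hU⟩ := hE (-S₀ - b) (by linarith)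
      have hle := le_iSup (fun U : Y → ℝ =>
        (((∑ y, μ y * U y) - Emax P U : ℝ) : EReal)) U
      rw [← EmaxStar, hb] at hle
      have := EReal.coe_le_coe_iff.mp hle
      linarith
  rw [hLHS, hRHS, ← EReal.coe_neg, neg_neg]


end
end

section
/- In the random coefficients logit model, let d be a positive integer, Z : 𝒴₀ → ℝ^d, T > 0, and let P_e be a Borel probability measure on ℝ^d with ∫ ‖e‖ dP_e(e) < ∞. For U : 𝒴 → ℝ, extended to 𝒴₀ by U_0 = 0, define G(U) = ∫ T · log( Σ_{ŷ∈𝒴₀} exp((U_ŷ + ⟨Z_ŷ, e⟩)/T) ) dP_e(e) and G*(μ) = sup_{U : 𝒴 → ℝ}( Σ_{y∈𝒴} μ_y U_y − G(U) ). Then for every μ : 𝒴 → ℝ with μ_y ≥ 0 and Σ_{y∈𝒴} μ_y ≤ 1, setting μ_0 = 1 − Σ_{y∈𝒴} μ_y, G*(μ) equals the infimum over all measurable π : ℝ^d → ℝ^{𝒴₀} with π_ŷ(e) ≥ 0 and Σ_{ŷ∈𝒴₀} π_ŷ(e) = 1 for P_e-almost every e and ∫ π_ŷ(e) dP_e(e)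 = μ_ŷ for every ŷ ∈ 𝒴₀, of ∫ [ T Σ_{ŷ∈𝒴₀} π_ŷ(e) log π_ŷ(e) − Σ_{ŷ∈𝒴₀} ⟨Z_ŷ, e⟩ π_ŷ(e) ] dP_e(e) (with the convention 0·log 0 = 0). -/
set_option linter.unusedSectionVars false
set_option linter.unusedVariables false
set_option maxHeartbeats 1000000

open MeasureTheory

noncomputable section

open Filter Topology

namespace RclAux
open scoped Classical

variable {Y : Type*} [Fintype Y] {d : ℕ}

def cz (Z : Option Y → Fin d → ℝ) (yo : Option Y) (e : Fin d → ℝ) : ℝ := ∑ i, Z yo i * e i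

def SS (Z : Option Y → Fin d → ℝ) (T : ℝ) (s : Finset (Option Y)) (V : Option Y → ℝ)
    (e : Fin d → ℝ) : ℝ := ∑ yo ∈ s, Real.exp ((V yo + cz Z yo e) / T)

def lse (Z : Option Y → Fin d → ℝ) (T : ℝ) (s : Finset (Option Y)) (V : Option Y → ℝ)
    (e : Fin d → ℝ) : ℝ := T * Real.log (SS Z T s V e)

def sm (Z : Option Y → Fin d → ℝ) (T : ℝ) (s : Finset (Option Y)) (V : Option Y → ℝ)
    (yo : Option Y) (e : Fin d → ℝ) : ℝ :=
  Real.exp ((V yo + cz Z yo e) / T) / SS Z T s V e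

variable (Z : Option Y → Fin d → ℝ) (T : ℝ) (s : Finset (Option Y)) (V : Option Y → ℝ)

lemma SS_pos (hs : s.Nonempty) (e : Fin d → ℝ) : 0 < SS Z T s V e :=
  Finset.sum_pos (fun _ _ => Real.exp_pos _) hs

lemma cz_cont (yo : Option Y) : Continuous (cz Z yo) := by
  unfold cz; exact continuous_finset_sum _ fun i _ => continuous_const.mul (continuous_apply i)

lemma cz_abs_le (yo : Option Y) (e : Fin d → ℝ) :
    |cz Z yo e| ≤ (∑ i, |Z yo i|) * ‖e‖ := by
  calc |cz Z yo e| ≤ ∑ i, |Z yo i * e i| := Finset.abs_sum_le_sum_abs _ _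
    _ ≤ ∑ i, |Z yo i| * ‖e‖ := by
        refine Finset.sum_le_sum fun i _ => ?_
        rw [abs_mul]
        exact mul_le_mul_of_nonneg_left (by simpa using norm_le_pi_norm e i) (abs_nonneg _)
    _ = (∑ i, |Z yo i|) * ‖e‖ := by rw [Finset.sum_mul]

variable (Pe : Measure (Fin d → ℝ)) [IsProbabilityMeasure Pe]

lemma integrable_cz (hPe : Integrable (fun e => ‖e‖) Pe) (yo : Option Y) :
    Integrable (cz Z yo) Pe := by
  refine Integrable.mono' (hPe.const_mul (∑ i, |Z yo i|)) ((cz_cont Z yo).aestronglyMeasurable)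
    (Filter.Eventually.of_forall fun e => ?_)
  simpa using cz_abs_le Z yo e

lemma SS_cont : Continuous (fun e => SS Z T s V e) := by
  unfold SS
  exact continuous_finset_sum _ fun yo _ =>
    (Real.continuous_exp.comp (((continuous_const.add (cz_cont Z yo)).div_const T)))

lemma lse_cont (hs : s.Nonempty) : Continuous (fun e => lse Z T s V e) := by
  unfold lse
  exact continuous_const.mul ((SS_cont Z T s V).log (fun e => (SS_pos Z T s V hs e).ne'))

lemma le_lse (hT : 0 < T) (hs : s.Nonempty) {yo : Option Y} (hyo : yo ∈ s) (e : Fin d → ℝ) :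
    V yo + cz Z yo e ≤ lse Z T s V e := by
  have h1 : Real.exp ((V yo + cz Z yo e) / T) ≤ SS Z T s V e :=
    Finset.single_le_sum (f := fun yo => Real.exp ((V yo + cz Z yo e) / T))
      (fun _ _ => (Real.exp_pos _).le) hyo
  have := Real.log_le_log (Real.exp_pos _) h1
  rw [Real.log_exp] at this
  unfold lse
  calc V yo + cz Z yo e = T * ((V yo + cz Z yo e) / T) := by field_simp
    _ ≤ T * Real.log (SS Z T s V e) := by exact mul_le_mul_of_nonneg_left this hT.le

lemma abs_lse_le (hT : 0 < T) (hs : s.Nonempty) (e : Fin d → ℝ) :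
    |lse Z T s V e| ≤ T * Real.log s.card + ∑ yo ∈ s, (|V yo| + |cz Z yo e|) := by
  set Q := ∑ yo ∈ s, (|V yo| + |cz Z yo e|) with hQ
  have hQ0 : 0 ≤ Q := Finset.sum_nonneg fun _ _ => by positivity
  have hcard : (1 : ℝ) ≤ s.card := by exact_mod_cast hs.card_pos
  have hlogcard : 0 ≤ T * Real.log s.card := by
    have := Real.log_nonneg hcard
    positivity
  have hterm : ∀ yo ∈ s, V yo + cz Z yo e ≤ Q := by
    intro yo hyo
    calc V yo + cz Z yo e ≤ |V yo| + |cz Z yo e| := by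
          exact add_le_add (le_abs_self _) (le_abs_self _)
      _ ≤ Q := Finset.single_le_sum (f := fun yo => |V yo| + |cz Z yo e|) (fun _ _ => by positivity) hyo
  have hup : lse Z T s V e ≤ T * Real.log s.card + Q := by
    have hSSle : SS Z T s V e ≤ s.card * Real.exp (Q / T) := by
      unfold SS
      calc ∑ yo ∈ s, Real.exp ((V yo + cz Z yo e) / T) ≤ ∑ _yo ∈ s, Real.exp (Q / T) :=
            Finset.sum_le_sum fun yo hyo => Real.exp_le_exp.2 (by gcongr; exact hterm yo hyo)
        _ = s.card * Real.exp (Q / T) := by rw [Finset.sum_const, nsmul_eq_mul]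
    have hlog := Real.log_le_log (SS_pos Z T s V hs e) hSSle
    rw [Real.log_mul (by positivity) (Real.exp_ne_zero _), Real.log_exp] at hlog
    unfold lse
    calc T * Real.log (SS Z T s V e) ≤ T * (Real.log s.card + Q / T) :=
          mul_le_mul_of_nonneg_left hlog hT.le
      _ = T * Real.log s.card + Q := by field_simp
  have hdown : -(T * Real.log s.card + Q) ≤ lse Z T s V e := by
    obtain ⟨yo, hyo⟩ := hs
    have h1 := le_lse Z T s V hT ⟨yo, hyo⟩ hyo e
    have h2 : -(|V yo| + |cz Z yo e|) ≤ V yo + cz Z yo e := by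
      have := neg_abs_le (V yo); have := neg_abs_le (cz Z yo e); linarith [neg_abs_le (V yo), neg_abs_le (cz Z yo e)]
    have h3 : |V yo| + |cz Z yo e| ≤ Q := Finset.single_le_sum (f := fun yo => |V yo| + |cz Z yo e|) (fun _ _ => by positivity) hyo
    linarith
  rw [abs_le]; exact ⟨by linarith, hup⟩

lemma integrable_lse (hT : 0 < T) (hs : s.Nonempty) (hPe : Integrable (fun e => ‖e‖) Pe) :
    Integrable (fun e => lse Z T s V e) Pe := by
  have hbd : Integrable (fun e => T * Real.log s.card + ∑ yo ∈ s, (|V yo| + |cz Z yo e|)) Pe := by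
    refine (integrable_const _).add (integrable_finset_sum _ fun yo _ => ?_)
    exact (integrable_const _).add (integrable_cz Z Pe hPe yo).abs
  exact Integrable.mono' hbd (lse_cont Z T s V hs).aestronglyMeasurable
    (Filter.Eventually.of_forall fun e => by
      simpa using abs_lse_le Z T s V hT hs e)

lemma lse_le_add (hT : 0 < T) (hs : s.Nonempty) {V' : Option Y → ℝ} {M : ℝ}
    (h : ∀ yo ∈ s, V yo ≤ V' yo + M) (e : Fin d → ℝ) :
    lse Z T s V e ≤ lse Z T s V' e + M := by
  have hSS : SS Z T s V e ≤ Real.exp (M / T) * SS Z T s V' e := by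
    unfold SS
    rw [Finset.mul_sum]
    refine Finset.sum_le_sum fun yo hyo => ?_
    rw [← Real.exp_add]
    exact Real.exp_le_exp.2 (by
      rw [← add_div]
      exact (div_le_div_iff_of_pos_right hT).2 (by linarith [h yo hyo]))
  have hlog := Real.log_le_log (SS_pos Z T s V hs e) hSS
  rw [Real.log_mul (Real.exp_ne_zero _) (SS_pos Z T s V' hs e).ne', Real.log_exp] at hlog
  unfold lse
  calc T * Real.log (SS Z T s V e) ≤ T * (M / T + Real.log (SS Z T s V' e)) :=
        mul_le_mul_of_nonneg_left hlog hT.le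
    _ = T * Real.log (SS Z T s V' e) + M := by field_simp; ring

lemma lse_shift (hT : 0 < T) (hs : s.Nonempty) (a : ℝ) (e : Fin d → ℝ) :
    lse Z T s (fun yo => V yo - a) e = lse Z T s V e - a := by
  have hSS : SS Z T s (fun yo => V yo - a) e = Real.exp (-a / T) * SS Z T s V e := by
    unfold SS
    rw [Finset.mul_sum]
    refine Finset.sum_congr rfl fun yo _ => ?_
    rw [← Real.exp_add]
    congr 1
    field_simp
    ring
  unfold lse
  rw [hSS, Real.log_mul (Real.exp_ne_zero _) (SS_pos Z T s V hs e).ne', Real.log_exp]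
  field_simp
  ring

lemma sm_pos (hs : s.Nonempty) (yo : Option Y) (e : Fin d → ℝ) : 0 < sm Z T s V yo e :=
  div_pos (Real.exp_pos _) (SS_pos Z T s V hs e)

lemma sm_le_one (hs : s.Nonempty) {yo : Option Y} (hyo : yo ∈ s) (e : Fin d → ℝ) :
    sm Z T s V yo e ≤ 1 := by
  rw [sm, div_le_one (SS_pos Z T s V hs e)]
  exact Finset.single_le_sum (f := fun yo => Real.exp ((V yo + cz Z yo e) / T))
    (fun _ _ => (Real.exp_pos _).le) hyo

lemma sum_sm (hs : s.Nonempty) (e : Fin d → ℝ) : ∑ yo ∈ s, sm Z T s V yo e = 1 := by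
  unfold sm
  rw [← Finset.sum_div]
  exact div_self (SS_pos Z T s V hs e).ne'

lemma sm_cont (hs : s.Nonempty) (yo : Option Y) : Continuous (fun e => sm Z T s V yo e) := by
  unfold sm
  exact ((Real.continuous_exp.comp ((continuous_const.add (cz_cont Z yo)).div_const T))).div
    (SS_cont Z T s V) (fun e => (SS_pos Z T s V hs e).ne')

lemma integrable_sm (hs : s.Nonempty) {yo : Option Y} (hyo : yo ∈ s) :
    Integrable (fun e => sm Z T s V yo e) Pe := by
  refine Integrable.mono' (integrable_const 1) (sm_cont Z T s V hs yo).aestronglyMeasurable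
    (Filter.Eventually.of_forall fun e => ?_)
  rw [Real.norm_eq_abs, abs_of_pos (sm_pos Z T s V hs yo e)]
  exact sm_le_one Z T s V hs hyo e

lemma log_sm (hs : s.Nonempty) (yo : Option Y) (e : Fin d → ℝ) :
    Real.log (sm Z T s V yo e) = (V yo + cz Z yo e) / T - Real.log (SS Z T s V e) := by
  rw [sm, Real.log_div (Real.exp_ne_zero _) (SS_pos Z T s V hs e).ne', Real.log_exp]

/-- Pointwise Gibbs inequality. -/
lemma gibbs (hT : 0 < T) (hs : s.Nonempty) (p a : Option Y → ℝ)
    (hp : ∀ yo ∈ s, 0 ≤ p yo) (hp1 : ∑ yo ∈ s, p yo = 1) :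
    ∑ yo ∈ s, p yo * a yo - T * Real.log (∑ yo ∈ s, Real.exp (a yo / T))
      ≤ T * ∑ yo ∈ s, p yo * Real.log (p yo) := by
  set Sa := ∑ yo ∈ s, Real.exp (a yo / T) with hSa
  have hSapos : 0 < Sa := Finset.sum_pos (fun _ _ => Real.exp_pos _) hs
  have key : ∀ yo ∈ s,
      p yo * a yo - p yo * (T * Real.log Sa) - T * (p yo * Real.log (p yo))
        ≤ T * (Real.exp (a yo / T) / Sa - p yo) := by
    intro yo hyo
    rcases eq_or_lt_of_le (hp yo hyo) with h0 | hpos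
    · rw [← h0]
      have : (0:ℝ) ≤ T * (Real.exp (a yo / T) / Sa) := by
        have := hSapos
        positivity
      simpa using this
    · have hne : p yo ≠ 0 := hpos.ne'
      have h1 : Real.log (Real.exp (a yo / T) / (Sa * p yo))
          ≤ Real.exp (a yo / T) / (Sa * p yo) - 1 :=
        Real.log_le_sub_one_of_pos (div_pos (Real.exp_pos _) (mul_pos hSapos hpos))
      rw [Real.log_div (Real.exp_ne_zero _) (by positivity), Real.log_exp,
        Real.log_mul hSapos.ne' hne] at h1
      have h2 := mul_le_mul_of_nonneg_left h1 hpos.le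
      have h3 := mul_le_mul_of_nonneg_left h2 hT.le
      calc p yo * a yo - p yo * (T * Real.log Sa) - T * (p yo * Real.log (p yo))
          = T * (p yo * (a yo / T - (Real.log Sa + Real.log (p yo)))) := by
            field_simp; ring
        _ ≤ T * (p yo * (Real.exp (a yo / T) / (Sa * p yo) - 1)) := h3
        _ = T * (Real.exp (a yo / T) / Sa - p yo) := by
            field_simp
  have hsum := Finset.sum_le_sum key
  have e1 : ∑ yo ∈ s, (p yo * a yo - p yo * (T * Real.log Sa) - T * (p yo * Real.log (p yo)))
      = (∑ yo ∈ s, p yo * a yo) - T * Real.log Sa - T * ∑ yo ∈ s, p yo * Real.log (p yo) := by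
    rw [Finset.sum_sub_distrib, Finset.sum_sub_distrib, ← Finset.sum_mul, hp1, ← Finset.mul_sum]
    ring
  have e2 : ∑ yo ∈ s, (T * (Real.exp (a yo / T) / Sa - p yo)) = 0 := by
    rw [← Finset.mul_sum, Finset.sum_sub_distrib, ← Finset.sum_div, hp1, ← hSa,
      div_self hSapos.ne']
    ring
  rw [e1, e2] at hsum
  linarith

def Phi' (Z : Option Y → Fin d → ℝ) (T : ℝ) (Pe : Measure (Fin d → ℝ)) (s : Finset (Option Y))
    (V : Option Y → ℝ) : ℝ := ∫ e, lse Z T s V e ∂Pe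

def nu' (Z : Option Y → Fin d → ℝ) (T : ℝ) (Pe : Measure (Fin d → ℝ)) (s : Finset (Option Y))
    (V : Option Y → ℝ) (yo : Option Y) : ℝ := ∫ e, sm Z T s V yo e ∂Pe

def pstar (Z : Option Y → Fin d → ℝ) (T : ℝ) (s : Finset (Option Y)) (V : Option Y → ℝ) :
    (Fin d → ℝ) → Option Y → ℝ := fun e yo => if yo ∈ s then sm Z T s V yo e else 0

lemma Phi_shift (hT : 0 < T) (hs : s.Nonempty) (hPe : Integrable (fun e => ‖e‖) Pe) (a : ℝ) :
    Phi' Z T Pe s (fun yo => V yo - a) = Phi' Z T Pe s V - a := by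
  unfold Phi'
  have : ∀ e, lse Z T s (fun yo => V yo - a) e = lse Z T s V e - a :=
    fun e => lse_shift Z T s V hT hs a e
  simp_rw [this]
  rw [integral_sub (integrable_lse Z T s V Pe hT hs hPe) (integrable_const a), integral_const]
  simp

lemma Phi_le_add (hT : 0 < T) (hs : s.Nonempty) (hPe : Integrable (fun e => ‖e‖) Pe)
    {V' : Option Y → ℝ} {M : ℝ} (h : ∀ yo ∈ s, V yo ≤ V' yo + M) :
    Phi' Z T Pe s V ≤ Phi' Z T Pe s V' + M := by
  unfold Phi'
  have h1 : ∫ e, lse Z T s V e ∂Pe ≤ ∫ e, (lse Z T s V' e + M) ∂Pe := by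
    refine integral_mono (integrable_lse Z T s V Pe hT hs hPe)
      ((integrable_lse Z T s V' Pe hT hs hPe).add (integrable_const M))
      (fun e => lse_le_add Z T s V hT hs h e)
  rw [integral_add (integrable_lse Z T s V' Pe hT hs hPe) (integrable_const M),
    integral_const] at h1
  simpa using h1

lemma Phi_cont (hT : 0 < T) (hs : s.Nonempty) (hPe : Integrable (fun e => ‖e‖) Pe) :
    Continuous (fun V => Phi' Z T Pe s V) := by
  refine LipschitzWith.continuous (K := 1) (LipschitzWith.of_dist_le_mul fun V V' => ?_)
  simp only [NNReal.coe_one, one_mul]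
  rw [Real.dist_eq, abs_sub_le_iff]
  constructor
  · have := Phi_le_add Z T s V Pe hT hs hPe (V' := V') (M := dist V V')
      (fun yo _ => by
        have := dist_le_pi_dist V V' yo
        rw [Real.dist_eq] at this
        cases abs_le.1 this; linarith)
    linarith
  · have := Phi_le_add Z T s V' Pe hT hs hPe (V' := V) (M := dist V V')
      (fun yo _ => by
        have h1 := dist_le_pi_dist V V' yo
        rw [Real.dist_eq] at h1
        cases abs_le.1 h1; linarith)
    linarith

lemma sum_nu (hT : 0 < T) (hs : s.Nonempty) : ∑ yo ∈ s, nu' Z T Pe s V yo = 1 := by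
  unfold nu'
  rw [← integral_finset_sum s (fun yo hyo => integrable_sm Z T s V Pe hs hyo)]
  have : ∀ e, ∑ yo ∈ s, sm Z T s V yo e = 1 := fun e => sum_sm Z T s V hs e
  simp_rw [this]
  simp

lemma eqcost (hT : 0 < T) (hs : s.Nonempty) (e : Fin d → ℝ) :
    T * ∑ yo : Option Y, pstar Z T s V e yo * Real.log (pstar Z T s V e yo)
      - ∑ yo : Option Y, cz Z yo e * pstar Z T s V e yo
    = (∑ yo ∈ s, sm Z T s V yo e * V yo) - lse Z T s V e := by
  have h1 : ∑ yo : Option Y, pstar Z T s V e yo * Real.log (pstar Z T s V e yo)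
      = ∑ yo ∈ s, sm Z T s V yo e * Real.log (sm Z T s V yo e) := by
    rw [← Finset.sum_subset (Finset.subset_univ s) (fun yo _ hyo => by
      simp [pstar, if_neg hyo])]
    exact Finset.sum_congr rfl fun yo hyo => by simp [pstar, if_pos hyo]
  have h2 : ∑ yo : Option Y, cz Z yo e * pstar Z T s V e yo
      = ∑ yo ∈ s, cz Z yo e * sm Z T s V yo e := by
    rw [← Finset.sum_subset (Finset.subset_univ s) (fun yo _ hyo => by
      simp [pstar, if_neg hyo])]
    exact Finset.sum_congr rfl fun yo hyo => by simp [pstar, if_pos hyo]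
  rw [h1, h2]
  have hterm : ∀ yo ∈ s, T * (sm Z T s V yo e * Real.log (sm Z T s V yo e))
      = sm Z T s V yo e * V yo + cz Z yo e * sm Z T s V yo e
        - (T * Real.log (SS Z T s V e)) * sm Z T s V yo e := by
    intro yo hyo
    rw [log_sm Z T s V hs yo e]
    field_simp
  have hsum : T * ∑ yo ∈ s, sm Z T s V yo e * Real.log (sm Z T s V yo e)
      = (∑ yo ∈ s, sm Z T s V yo e * V yo) + (∑ yo ∈ s, cz Z yo e * sm Z T s V yo e)
        - lse Z T s V e := by
    rw [Finset.mul_sum, Finset.sum_congr rfl hterm, Finset.sum_sub_distrib,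
      Finset.sum_add_distrib, ← Finset.mul_sum, sum_sm Z T s V hs e, mul_one]
    unfold lse
    ring
  rw [hsum]
  ring

lemma hasDerivAt_lse_pt (hT : 0 < T) (hs : s.Nonempty) {yo : Option Y} (hyo : yo ∈ s)
    (e : Fin d → ℝ) (t : ℝ) :
    HasDerivAt (fun t : ℝ => lse Z T s (V + Pi.single yo t) e)
      (sm Z T s (V + Pi.single yo t) yo e) t := by
  have hfun : (fun t : ℝ => lse Z T s (V + Pi.single yo t) e)
      = fun t : ℝ => T * Real.log (∑ yh ∈ s,
          Real.exp ((V yh + (if yh = yo then t else 0) + cz Z yh e) / T)) := by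
    funext t
    unfold lse SS
    congr 1
    refine congrArg _ (Finset.sum_congr rfl fun yh _ => ?_)
    rw [Pi.add_apply, Pi.single_apply]
  rw [hfun]
  have hSS : HasDerivAt (fun t : ℝ => ∑ yh ∈ s,
      Real.exp ((V yh + (if yh = yo then t else 0) + cz Z yh e) / T))
      (Real.exp ((V yo + t + cz Z yo e) / T) / T) t := by
    have := HasDerivAt.fun_sum (u := s) (x := t)
      (A := fun yh (t : ℝ) => Real.exp ((V yh + (if yh = yo then t else 0) + cz Z yh e) / T))
      (A' := fun yh => if yh = yo then Real.exp ((V yo + t + cz Z yo e) / T) / T else 0)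
      (fun yh _ => ?_)
    · have heq : ∑ yh ∈ s, (if yh = yo then Real.exp ((V yo + t + cz Z yo e) / T) / T else 0)
          = Real.exp ((V yo + t + cz Z yo e) / T) / T := by
        rw [Finset.sum_ite_eq' s yo (fun _ => Real.exp ((V yo + t + cz Z yo e) / T) / T),
          if_pos hyo]
      rwa [heq] at this
    · rcases eq_or_ne yh yo with h | h
      · subst h
        simp only [if_pos rfl]
        have h1 : HasDerivAt (fun t : ℝ => (V yh + t + cz Z yh e) / T) (1 / T) t := by
          have := (((hasDerivAt_id t).const_add (V yh)).add_const (cz Z yh e)).div_const T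
          simpa using this
        have := h1.exp
        simpa [div_eq_mul_inv, mul_comm] using this
      · simp only [if_neg h]
        exact hasDerivAt_const _ _
  have hpos : (0:ℝ) < ∑ yh ∈ s, Real.exp ((V yh + (if yh = yo then t else 0) + cz Z yh e) / T) :=
    Finset.sum_pos (fun _ _ => Real.exp_pos _) hs
  have hlog := (hSS.log hpos.ne').const_mul T
  have hval : T * (Real.exp ((V yo + t + cz Z yo e) / T) / T /
      (∑ yh ∈ s, Real.exp ((V yh + (if yh = yo then t else 0) + cz Z yh e) / T)))
      = sm Z T s (V + Pi.single yo t) yo e := by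
    unfold sm SS
    simp only [Pi.add_apply, Pi.single_apply, if_pos rfl, if_true]
    field_simp
  rwa [hval] at hlog

lemma hasDerivAt_Phi (hT : 0 < T) (hs : s.Nonempty) (hPe : Integrable (fun e => ‖e‖) Pe)
    {yo : Option Y} (hyo : yo ∈ s) :
    HasDerivAt (fun t : ℝ => Phi' Z T Pe s (V + Pi.single yo t)) (nu' Z T Pe s V yo) 0 := by
  have h0 : V + Pi.single yo (0:ℝ) = V := by simp
  have key := hasDerivAt_integral_of_dominated_loc_of_deriv_le (μ := Pe) (x₀ := (0:ℝ))
    (s := Metric.ball (0:ℝ) 1) (F := fun t e => lse Z T s (V + Pi.single yo t) e)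
    (F' := fun t e => sm Z T s (V + Pi.single yo t) yo e)
    (bound := fun _ => (1:ℝ)) (Metric.ball_mem_nhds _ one_pos)
    (Filter.Eventually.of_forall fun t =>
      (lse_cont Z T s (V + Pi.single yo t) hs).aestronglyMeasurable)
    (by simp only [h0]; exact integrable_lse Z T s V Pe hT hs hPe)
    (by simp only [h0]; exact (sm_cont Z T s V hs yo).aestronglyMeasurable)
    (Filter.Eventually.of_forall fun e => fun t _ => by
      rw [Real.norm_eq_abs, abs_of_pos (sm_pos Z T s _ hs yo e)]
      exact sm_le_one Z T s _ hs hyo e)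
    (integrable_const 1)
    (Filter.Eventually.of_forall fun e => fun t _ =>
      hasDerivAt_lse_pt Z T s V hT hs hyo e t)
  have hk := key.2
  simp only [h0] at hk
  exact hk

section Min

variable (μh : Option Y → ℝ) (s0 : Option Y)

lemma coercive (hT : 0 < T) (hs : s.Nonempty) (hPe : Integrable (fun e => ‖e‖) Pe)
    (hpos : ∀ yo ∈ s, 0 < μh yo) (hsum1 : ∑ yo ∈ s, μh yo = 1) (hs0 : s0 ∈ s)
    (V : Option Y → ℝ) (hV : ∀ yo, yo ∉ s.erase s0 → V yo = 0) :
    (s.inf' hs μh) * ‖V‖ + s.inf' hs (fun yo => ∫ e, cz Z yo e ∂Pe)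
      ≤ Phi' Z T Pe s V - ∑ yo ∈ s, μh yo * V yo := by
  set ε := s.inf' hs μh with hε
  set Imin := s.inf' hs (fun yo => ∫ e, cz Z yo e ∂Pe) with hI
  have hεpos : 0 < ε := by
    obtain ⟨yo, hyo, h⟩ := Finset.exists_mem_eq_inf' hs μh
    rw [hε, h]; exact hpos yo hyo
  set M := s.sup' hs V with hM
  obtain ⟨yoM, hyoM, hMeq⟩ := Finset.exists_mem_eq_sup' hs V
  have hVs0 : V s0 = 0 := hV s0 (Finset.notMem_erase s0 s)
  have hM0 : 0 ≤ M := by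
    rw [hM]
    calc (0:ℝ) = V s0 := hVs0.symm
      _ ≤ s.sup' hs V := Finset.le_sup' V hs0
  -- lower bound on Phi'
  have hPhi : M + Imin ≤ Phi' Z T Pe s V := by
    have h1 : ∫ e, (V yoM + cz Z yoM e) ∂Pe ≤ Phi' Z T Pe s V := by
      refine integral_mono ((integrable_const (V yoM)).add (integrable_cz Z Pe hPe yoM))
        (integrable_lse Z T s V Pe hT hs hPe) (fun e => le_lse Z T s V hT hs hyoM e)
    rw [integral_add (integrable_const _) (integrable_cz Z Pe hPe yoM), integral_const] at h1
    have h2 : Imin ≤ ∫ e, cz Z yoM e ∂Pe := Finset.inf'_le _ hyoM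
    simp only [measure_univ, ENNReal.toReal_one, probReal_univ, smul_eq_mul, one_mul] at h1
    rw [← hMeq] at h1
    linarith
  set D := ∑ yo ∈ s, μh yo * (M - V yo) with hD
  have hDeq : D = M - ∑ yo ∈ s, μh yo * V yo := by
    rw [hD]
    rw [Finset.sum_congr rfl (fun yo _ => mul_sub (μh yo) M (V yo)), Finset.sum_sub_distrib,
      ← Finset.sum_mul, hsum1, one_mul]
  have hterm_nonneg : ∀ yo ∈ s, 0 ≤ μh yo * (M - V yo) := fun yo hyo =>
    mul_nonneg (hpos yo hyo).le (by
      have := Finset.le_sup' V hyo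
      rw [hM]; linarith [Finset.le_sup' V hyo])
  have hclaim : ∀ yh : Option Y, ε * |V yh| ≤ D := by
    intro yh
    by_cases hmem : yh ∈ s.erase s0
    · have hyhs : yh ∈ s := Finset.mem_of_mem_erase hmem
      rcases le_or_gt 0 (V yh) with hVpos | hVneg
      · have h1 : μh s0 * (M - V s0) ≤ D :=
          Finset.single_le_sum hterm_nonneg hs0
        rw [hVs0, sub_zero] at h1
        have h2 : V yh ≤ M := by rw [hM]; exact Finset.le_sup' V hyhs
        have h3 : ε ≤ μh s0 := Finset.inf'_le _ hs0
        rw [abs_of_nonneg hVpos]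
        nlinarith
      · have h1 : μh yh * (M - V yh) ≤ D := Finset.single_le_sum hterm_nonneg hyhs
        have h3 : ε ≤ μh yh := Finset.inf'_le _ hyhs
        rw [abs_of_neg hVneg]
        nlinarith [hpos yh hyhs]
    · rw [hV yh hmem]
      simp only [abs_zero, mul_zero]
      exact Finset.sum_nonneg hterm_nonneg
  have hnorm : ε * ‖V‖ ≤ D := by
    have hD0 : 0 ≤ D := Finset.sum_nonneg hterm_nonneg
    have : ‖V‖ ≤ D / ε := by
      refine (pi_norm_le_iff_of_nonneg (by positivity)).2 fun yh => ?_
      rw [Real.norm_eq_abs, le_div_iff₀ hεpos]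
      calc |V yh| * ε = ε * |V yh| := by ring
        _ ≤ D := hclaim yh
    calc ε * ‖V‖ ≤ ε * (D / ε) := mul_le_mul_of_nonneg_left this hεpos.le
      _ = D := by field_simp
  linarith [hPhi, hnorm, hDeq.symm.le]

lemma exists_min (hT : 0 < T) (hs : s.Nonempty) (hPe : Integrable (fun e => ‖e‖) Pe)
    (hpos : ∀ yo ∈ s, 0 < μh yo) (hsum1 : ∑ yo ∈ s, μh yo = 1) (hs0 : s0 ∈ s) :
    ∃ V : Option Y → ℝ, (∀ yo, yo ∉ s.erase s0 → V yo = 0) ∧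
      ∀ V' : Option Y → ℝ, (∀ yo, yo ∉ s.erase s0 → V' yo = 0) →
        Phi' Z T Pe s V - ∑ yo ∈ s, μh yo * V yo
          ≤ Phi' Z T Pe s V' - ∑ yo ∈ s, μh yo * V' yo := by
  classical
  set ε := s.inf' hs μh with hε
  set Imin := s.inf' hs (fun yo => ∫ e, cz Z yo e ∂Pe) with hI
  have hεpos : 0 < ε := by
    obtain ⟨yo, hyo, h⟩ := Finset.exists_mem_eq_inf' hs μh
    rw [hε, h]; exact hpos yo hyo
  set F : (Option Y → ℝ) → ℝ := fun V => Phi' Z T Pe s V - ∑ yo ∈ s, μh yo * V yo with hF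
  have hFcont : Continuous F :=
    (Phi_cont Z T s Pe hT hs hPe).sub
      (continuous_finset_sum _ fun yo _ => continuous_const.mul (continuous_apply yo))
  set Wset : Set (Option Y → ℝ) := {V | ∀ yo, yo ∉ s.erase s0 → V yo = 0} with hW
  have hWclosed : IsClosed Wset := by
    have : Wset = ⋂ yo : Option Y, {V : Option Y → ℝ | yo ∉ s.erase s0 → V yo = 0} := by
      ext V; simp [hW, Set.mem_iInter]
    rw [this]
    refine isClosed_iInter fun yo => ?_
    by_cases h : yo ∈ s.erase s0
    · simp only [h, not_true_eq_false]
      convert isClosed_univ using 1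
      ext V; simp
    · simp only [h, not_false_eq_true]
      convert isClosed_eq (continuous_apply yo) (continuous_const : Continuous fun _ : Option Y → ℝ => (0:ℝ)) using 1
      ext V; simp
  set R : ℝ := max 0 ((F 0 - Imin + 1) / ε) with hR
  set K : Set (Option Y → ℝ) := Metric.closedBall 0 R ∩ Wset with hK
  have hKcompact : IsCompact K := (isCompact_closedBall 0 R).inter_right hWclosed
  have h0W : (0 : Option Y → ℝ) ∈ Wset := fun yo _ => rfl
  have h0K : (0 : Option Y → ℝ) ∈ K :=
    ⟨Metric.mem_closedBall_self (le_max_left _ _), h0W⟩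
  obtain ⟨V, hVK, hVmin⟩ := hKcompact.exists_isMinOn ⟨0, h0K⟩ hFcont.continuousOn
  refine ⟨V, hVK.2, fun V' hV' => ?_⟩
  by_cases hball : V' ∈ Metric.closedBall (0 : Option Y → ℝ) R
  · exact hVmin ⟨hball, hV'⟩
  · have hnorm : R < ‖V'‖ := by
      rw [Metric.mem_closedBall, dist_zero_right] at hball
      linarith [not_le.1 hball]
    have hcoer := coercive Z T s Pe μh s0 hT hs hPe hpos hsum1 hs0 V' hV'
    have hR2 : (F 0 - Imin + 1) / ε ≤ R := le_max_right _ _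
    have hεR : F 0 - Imin + 1 ≤ ε * R := by
      rw [div_le_iff₀ hεpos] at hR2
      linarith
    have h1 : F V ≤ F 0 := hVmin h0K
    have h2 : ε * R ≤ ε * ‖V'‖ := mul_le_mul_of_nonneg_left hnorm.le hεpos.le
    have h3 : F V' = Phi' Z T Pe s V' - ∑ yo ∈ s, μh yo * V' yo := rfl
    rw [← hε, ← hI] at hcoer
    show F V ≤ F V'
    rw [h3]
    linarith

end Min

lemma nu_eq_of_min (hT : 0 < T) (hs : s.Nonempty) (hPe : Integrable (fun e => ‖e‖) Pe)
    (μh : Option Y → ℝ) (s0 : Option Y)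
    (hpos : ∀ yo ∈ s, 0 < μh yo) (hsum1 : ∑ yo ∈ s, μh yo = 1) (hs0 : s0 ∈ s)
    (V : Option Y → ℝ) (hVW : ∀ yo, yo ∉ s.erase s0 → V yo = 0)
    (hVmin : ∀ V' : Option Y → ℝ, (∀ yo, yo ∉ s.erase s0 → V' yo = 0) →
      Phi' Z T Pe s V - ∑ yo ∈ s, μh yo * V yo
        ≤ Phi' Z T Pe s V' - ∑ yo ∈ s, μh yo * V' yo) :
    ∀ yo ∈ s, nu' Z T Pe s V yo = μh yo := by
  classical
  have herase : ∀ yo ∈ s.erase s0, nu' Z T Pe s V yo = μh yo := by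
    intro yo hyo
    have hys : yo ∈ s := Finset.mem_of_mem_erase hyo
    set φ : ℝ → ℝ := fun t =>
      Phi' Z T Pe s (V + Pi.single yo t) - ∑ yh ∈ s, μh yh * ((V + Pi.single yo t : Option Y → ℝ)) yh with hφ
    have hlin : HasDerivAt (fun t : ℝ => ∑ yh ∈ s, μh yh * ((V + Pi.single yo t : Option Y → ℝ)) yh)
        (μh yo) 0 := by
      have hfun : (fun t : ℝ => ∑ yh ∈ s, μh yh * ((V + Pi.single yo t : Option Y → ℝ)) yh)
          = fun t : ℝ => (∑ yh ∈ s, μh yh * V yh) + μh yo * t := by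
        funext t
        simp_rw [Pi.add_apply, Pi.single_apply, mul_add]
        rw [Finset.sum_add_distrib]
        congr 1
        rw [Finset.sum_congr rfl (fun yh _ => by rw [mul_ite, mul_zero]),
          Finset.sum_ite_eq' s yo (fun yh => μh yh * t), if_pos hys]
      rw [hfun]
      simpa using ((hasDerivAt_id (0:ℝ)).const_mul (μh yo)).const_add
        (∑ yh ∈ s, μh yh * V yh)
    have hphi := hasDerivAt_Phi Z T s V Pe hT hs hPe hys
    have hder : HasDerivAt φ (nu' Z T Pe s V yo - μh yo) 0 := hphi.sub hlin
    have h0 : V + Pi.single yo (0:ℝ) = V := by simp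
    have hloc : IsLocalMin φ 0 := by
      refine Filter.Eventually.of_forall fun t => ?_
      have hmem : ∀ yh, yh ∉ s.erase s0 → ((V + Pi.single yo t : Option Y → ℝ)) yh = 0 := by
        intro yh hyh
        have hne : yh ≠ yo := fun h => hyh (h ▸ hyo)
        rw [Pi.add_apply, hVW yh hyh, Pi.single_eq_of_ne hne, add_zero]
      have := hVmin (V + Pi.single yo t) hmem
      simpa [hφ, h0] using this
    have := hloc.hasDerivAt_eq_zero hder
    linarith [this]
  intro yo hyo
  by_cases h : yo = s0
  · subst h
    have h1 := sum_nu Z T s V Pe hT hs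
    rw [← Finset.add_sum_erase s _ hyo] at h1 hsum1
    have h2 : ∑ yh ∈ s.erase yo, nu' Z T Pe s V yh = ∑ yh ∈ s.erase yo, μh yh :=
      Finset.sum_congr rfl herase
    linarith
  · exact herase yo (Finset.mem_erase.2 ⟨h, hyo⟩)

lemma abs_mul_log_le_one {x : ℝ} (h0 : 0 ≤ x) (h1 : x ≤ 1) : |x * Real.log x| ≤ 1 := by
  rcases eq_or_lt_of_le h0 with h | hx
  · rw [← h]; simp
  · have hlog : Real.log x ≤ 0 := Real.log_nonpos h0 h1
    have hkey : -Real.log x ≤ 1 / x - 1 := by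
      have := Real.log_le_sub_one_of_pos (show (0:ℝ) < 1 / x by positivity)
      rw [Real.log_div one_ne_zero hx.ne', Real.log_one, zero_sub] at this
      linarith
    have h2 : x * (-Real.log x) ≤ x * (1 / x - 1) := mul_le_mul_of_nonneg_left hkey h0
    have h3 : x * (1 / x - 1) = 1 - x := by field_simp
    rw [abs_of_nonpos (mul_nonpos_of_nonneg_of_nonpos h0 hlog)]
    nlinarith

variable [Nonempty Y]

lemma weak_duality (hT : 0 < T) (hPe : Integrable (fun e => ‖e‖) Pe)
    (μh : Option Y → ℝ)
    (π : (Fin d → ℝ) → Option Y → ℝ) (hπm : Measurable π)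
    (hπae : ∀ᵐ e ∂Pe, (∀ yo : Option Y, 0 ≤ π e yo) ∧ (∑ yo : Option Y, π e yo) = 1)
    (hπint : ∀ yo : Option Y, ∫ e, π e yo ∂Pe = μh yo)
    (V : Option Y → ℝ) :
    (∑ yo : Option Y, μh yo * V yo) - Phi' Z T Pe Finset.univ V
      ≤ ∫ e, (T * ∑ yo : Option Y, π e yo * Real.log (π e yo)
          - ∑ yo : Option Y, cz Z yo e * π e yo) ∂Pe := by
  have hsuniv : (Finset.univ : Finset (Option Y)).Nonempty := Finset.univ_nonempty
  have hπyo : ∀ yo : Option Y, Measurable (fun e => π e yo) :=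
    fun yo => (measurable_pi_apply yo).comp hπm
  have hbd : ∀ᵐ e ∂Pe, ∀ yo : Option Y, 0 ≤ π e yo ∧ π e yo ≤ 1 := by
    filter_upwards [hπae] with e he yo
    refine ⟨he.1 yo, ?_⟩
    calc π e yo ≤ ∑ yh : Option Y, π e yh :=
          Finset.single_le_sum (fun yh _ => he.1 yh) (Finset.mem_univ yo)
      _ = 1 := he.2
  -- integrability of the pieces
  have hint_plog : ∀ yo : Option Y, Integrable (fun e => π e yo * Real.log (π e yo)) Pe := by
    intro yo
    refine Integrable.mono' (integrable_const 1)
      (((hπyo yo).mul (Real.measurable_log.comp (hπyo yo))).aestronglyMeasurable) ?_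
    filter_upwards [hbd] with e he
    rw [Real.norm_eq_abs]
    exact abs_mul_log_le_one (he yo).1 (he yo).2
  have hint_czπ : ∀ yo : Option Y, Integrable (fun e => cz Z yo e * π e yo) Pe := by
    intro yo
    refine Integrable.mono' (integrable_cz Z Pe hPe yo).abs
      (((cz_cont Z yo).measurable.mul (hπyo yo)).aestronglyMeasurable) ?_
    filter_upwards [hbd] with e he
    rw [Real.norm_eq_abs, abs_mul]
    calc |cz Z yo e| * |π e yo| ≤ |cz Z yo e| * 1 := by
          refine mul_le_mul_of_nonneg_left ?_ (abs_nonneg _)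
          rw [abs_of_nonneg (he yo).1]; exact (he yo).2
      _ = |cz Z yo e| := mul_one _
  have hint_cost : Integrable (fun e => T * ∑ yo : Option Y, π e yo * Real.log (π e yo)
      - ∑ yo : Option Y, cz Z yo e * π e yo) Pe :=
    ((integrable_finset_sum _ fun yo _ => hint_plog yo).const_mul T).sub
      (integrable_finset_sum _ fun yo _ => hint_czπ yo)
  have hint_πV : ∀ yo : Option Y, Integrable (fun e => π e yo * V yo) Pe := by
    intro yo
    refine Integrable.mono' (integrable_const (|V yo|))
      (((hπyo yo).mul_const (V yo)).aestronglyMeasurable) ?_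
    filter_upwards [hbd] with e he
    rw [Real.norm_eq_abs, abs_mul]
    calc |π e yo| * |V yo| ≤ 1 * |V yo| := by
          refine mul_le_mul_of_nonneg_right ?_ (abs_nonneg _)
          rw [abs_of_nonneg (he yo).1]; exact (he yo).2
      _ = |V yo| := one_mul _
  have hint_f1 : Integrable (fun e => (∑ yo : Option Y, π e yo * V yo)
      - lse Z T Finset.univ V e) Pe :=
    (integrable_finset_sum _ fun yo _ => hint_πV yo).sub
      (integrable_lse Z T Finset.univ V Pe hT hsuniv hPe)
  -- pointwise inequality
  have hae2 : ∀ᵐ e ∂Pe, (∑ yo : Option Y, π e yo * V yo) - lse Z T Finset.univ V e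
      ≤ T * ∑ yo : Option Y, π e yo * Real.log (π e yo)
        - ∑ yo : Option Y, cz Z yo e * π e yo := by
    filter_upwards [hπae] with e he
    have hg := gibbs T Finset.univ hT hsuniv (fun yo => π e yo)
      (fun yo => V yo + cz Z yo e) (fun yo _ => he.1 yo) he.2
    have hconv : (∑ yo : Option Y, Real.exp ((V yo + cz Z yo e) / T)) = SS Z T Finset.univ V e :=
      rfl
    rw [hconv] at hg
    have hsplit : ∑ yo : Option Y, π e yo * (V yo + cz Z yo e)
        = (∑ yo : Option Y, π e yo * V yo) + ∑ yo : Option Y, cz Z yo e * π e yo := by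
      rw [← Finset.sum_add_distrib]
      exact Finset.sum_congr rfl fun yo _ => by ring
    rw [hsplit] at hg
    unfold lse
    linarith
  have hmono := integral_mono_ae hint_f1 hint_cost hae2
  have hleft : ∫ e, ((∑ yo : Option Y, π e yo * V yo) - lse Z T Finset.univ V e) ∂Pe
      = (∑ yo : Option Y, μh yo * V yo) - Phi' Z T Pe Finset.univ V := by
    rw [integral_sub (integrable_finset_sum _ fun yo _ => hint_πV yo)
      (integrable_lse Z T Finset.univ V Pe hT hsuniv hPe),
      integral_finset_sum _ (fun yo _ => hint_πV yo)]
    unfold Phi'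
    congr 1
    refine Finset.sum_congr rfl fun yo _ => ?_
    rw [integral_mul_const, hπint yo]
  rw [hleft] at hmono
  exact hmono

lemma cost_pstar (hT : 0 < T) (hs : s.Nonempty) (hPe : Integrable (fun e => ‖e‖) Pe) :
    ∫ e, (T * ∑ yo : Option Y, pstar Z T s V e yo * Real.log (pstar Z T s V e yo)
      - ∑ yo : Option Y, cz Z yo e * pstar Z T s V e yo) ∂Pe
    = (∑ yo ∈ s, nu' Z T Pe s V yo * V yo) - Phi' Z T Pe s V := by
  have heq : ∀ e, (T * ∑ yo : Option Y, pstar Z T s V e yo * Real.log (pstar Z T s V e yo)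
      - ∑ yo : Option Y, cz Z yo e * pstar Z T s V e yo)
      = (∑ yo ∈ s, sm Z T s V yo e * V yo) - lse Z T s V e :=
    fun e => eqcost Z T s V hT hs e
  simp_rw [heq]
  rw [integral_sub (integrable_finset_sum _ fun yo hyo =>
      (integrable_sm Z T s V Pe hs hyo).mul_const (V yo))
    (integrable_lse Z T s V Pe hT hs hPe),
    integral_finset_sum _ (fun yo hyo => (integrable_sm Z T s V Pe hs hyo).mul_const (V yo))]
  unfold Phi' nu'
  congr 1
  exact Finset.sum_congr rfl fun yo _ => integral_mul_const _ _

lemma tend_Phi (hT : 0 < T) (hs : s.Nonempty) (hPe : Integrable (fun e => ‖e‖) Pe) :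
    Filter.Tendsto
      (fun m : ℕ => Phi' Z T Pe Finset.univ (fun yo => if yo ∈ s then V yo else -(m:ℝ)))
      Filter.atTop (𝓝 (Phi' Z T Pe s V)) := by
  have hsuniv : (Finset.univ : Finset (Option Y)).Nonempty := hs.mono (Finset.subset_univ s)
  set A : ℕ → Option Y → ℝ := fun m yo => if yo ∈ s then V yo else -(m:ℝ) with hA
  have hlow : ∀ m : ℕ, ∀ e, lse Z T s V e ≤ lse Z T Finset.univ (A m) e := by
    intro m e
    have hSS : SS Z T s V e ≤ SS Z T Finset.univ (A m) e := by
      unfold SS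
      have h1 : ∑ yo ∈ s, Real.exp ((V yo + cz Z yo e) / T)
          = ∑ yo ∈ s, Real.exp ((A m yo + cz Z yo e) / T) :=
        Finset.sum_congr rfl fun yo hyo => by rw [hA]; simp [hyo]
      rw [h1]
      exact Finset.sum_le_sum_of_subset_of_nonneg (Finset.subset_univ s)
        (fun _ _ _ => (Real.exp_pos _).le)
    unfold lse
    exact mul_le_mul_of_nonneg_left
      (Real.log_le_log (SS_pos Z T s V hs e) hSS) hT.le
  have hup : ∀ m : ℕ, ∀ e, lse Z T Finset.univ (A m) e ≤ lse Z T Finset.univ (A 0) e := by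
    intro m e
    refine lse_le_add Z T Finset.univ (A m) hT hsuniv (V' := A 0) (M := 0) ?_ e |>.trans_eq
      (add_zero _)
    intro yo _
    rw [hA]
    by_cases h : yo ∈ s
    · simp [h]
    · simp only [h, if_false]
      have : -(m:ℝ) ≤ -(0:ℕ) := by
        simp only [Nat.cast_zero, neg_zero, neg_nonpos]
        positivity
      simpa using this
  unfold Phi'
  refine tendsto_integral_of_dominated_convergence
    (fun e => |lse Z T s V e| + |lse Z T Finset.univ (A 0) e|)
    (fun m => (lse_cont Z T Finset.univ (A m) hsuniv).aestronglyMeasurable)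
    ((integrable_lse Z T s V Pe hT hs hPe).abs.add
      (integrable_lse Z T Finset.univ (A 0) Pe hT hsuniv hPe).abs)
    (fun m => Filter.Eventually.of_forall fun e => ?_)
    (Filter.Eventually.of_forall fun e => ?_)
  · show |lse Z T Finset.univ (A m) e| ≤ |lse Z T s V e| + |lse Z T Finset.univ (A 0) e|
    rw [abs_le]
    constructor
    · have h1 := hlow m e
      have := neg_abs_le (lse Z T s V e)
      have h2 : (0:ℝ) ≤ |lse Z T Finset.univ (A 0) e| := abs_nonneg _
      linarith
    · have h1 := hup m e
      have := le_abs_self (lse Z T Finset.univ (A 0) e)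
      have h2 : (0:ℝ) ≤ |lse Z T s V e| := abs_nonneg _
      linarith
  · show Filter.Tendsto (fun m : ℕ => lse Z T Finset.univ (A m) e) Filter.atTop
      (𝓝 (lse Z T s V e))
    have hsplit : ∀ m : ℕ, SS Z T Finset.univ (A m) e
        = SS Z T s V e + ∑ yo ∈ sᶜ, Real.exp ((-(m:ℝ) + cz Z yo e) / T) := by
      intro m
      unfold SS
      rw [← Finset.sum_add_sum_compl s]
      congr 1
      · exact Finset.sum_congr rfl fun yo hyo => by rw [hA]; simp [hyo]
      · refine Finset.sum_congr rfl fun yo hyo => ?_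
        rw [Finset.mem_compl] at hyo
        rw [hA]; simp [hyo]
    have htail : Filter.Tendsto
        (fun m : ℕ => ∑ yo ∈ sᶜ, Real.exp ((-(m:ℝ) + cz Z yo e) / T))
        Filter.atTop (𝓝 0) := by
      have : ∀ yo : Option Y, Filter.Tendsto
          (fun m : ℕ => Real.exp ((-(m:ℝ) + cz Z yo e) / T)) Filter.atTop (𝓝 0) := by
        intro yo
        have hexp : ∀ m : ℕ, Real.exp ((-(m:ℝ) + cz Z yo e) / T)
            = Real.exp (cz Z yo e / T) * Real.exp (-((m:ℝ) / T)) := by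
          intro m
          rw [← Real.exp_add]
          congr 1
          field_simp
          ring
        simp_rw [hexp]
        rw [show (0:ℝ) = Real.exp (cz Z yo e / T) * 0 by ring]
        refine Filter.Tendsto.const_mul _ ?_
        refine Real.tendsto_exp_atBot.comp ?_
        refine Filter.tendsto_neg_atBot_iff.2 ?_
        exact Filter.Tendsto.atTop_div_const hT tendsto_natCast_atTop_atTop
      have h0 : (0:ℝ) = ∑ _yo ∈ (sᶜ : Finset (Option Y)), (0:ℝ) := by simp
      rw [h0]
      exact tendsto_finset_sum _ fun yo _ => this yo
    have hSSlim : Filter.Tendsto (fun m : ℕ => SS Z T Finset.univ (A m) e)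
        Filter.atTop (𝓝 (SS Z T s V e)) := by
      simp_rw [hsplit]
      simpa using Filter.Tendsto.const_add (SS Z T s V e) htail
    unfold lse
    refine Filter.Tendsto.const_mul T ?_
    exact ((Real.continuousAt_log (SS_pos Z T s V hs e).ne').tendsto).comp hSSlim

lemma pstar_measurable (hs : s.Nonempty) : Measurable (pstar Z T s V) := by
  refine measurable_pi_lambda _ fun yo => ?_
  by_cases h : yo ∈ s
  · simp only [pstar, if_pos h]
    exact (sm_cont Z T s V hs yo).measurable
  · simp only [pstar, if_neg h]
    exact measurable_const

lemma pstar_simplex (hs : s.Nonempty) (e : Fin d → ℝ) :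
    (∀ yo : Option Y, 0 ≤ pstar Z T s V e yo) ∧ (∑ yo : Option Y, pstar Z T s V e yo) = 1 := by
  constructor
  · intro yo
    by_cases h : yo ∈ s
    · simp only [pstar, if_pos h]
      exact (sm_pos Z T s V hs yo e).le
    · simp [pstar, if_neg h]
  · rw [← Finset.sum_subset (Finset.subset_univ s) (fun yo _ hyo => by
      simp [pstar, if_neg hyo])]
    rw [Finset.sum_congr rfl (fun yo hyo => by simp [pstar, if_pos hyo] : ∀ yo ∈ s,
      pstar Z T s V e yo = sm Z T s V yo e)]
    exact sum_sm Z T s V hs e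

lemma pstar_integral (hs : s.Nonempty) (yo : Option Y) :
    ∫ e, pstar Z T s V e yo ∂Pe = if yo ∈ s then nu' Z T Pe s V yo else 0 := by
  by_cases h : yo ∈ s
  · simp only [pstar, if_pos h]
    rfl
  · simp only [pstar, if_neg h]
    simp

end RclAux

variable {Y : Type*} [Fintype Y] [Nonempty Y]

/-- The Emax operator of the random coefficients logit model:
`G(U) = ∫ T log Σ_{ŷ∈𝒴₀} exp((U_ŷ + ⟨Z_ŷ, e⟩)/T) dP_e(e)`. -/
def Grcl (d : ℕ) (Z : Option Y → Fin d → ℝ) (T : ℝ)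
    (Pe : Measure (Fin d → ℝ)) (U : Y → ℝ) : ℝ :=
  ∫ e, T * Real.log (∑ yo : Option Y,
    Real.exp ((optExt U yo + ∑ i, Z yo i * e i) / T)) ∂Pe

/-- Its Legendre–Fenchel transform, valued in `EReal`. -/
def GrclStar (d : ℕ) (Z : Option Y → Fin d → ℝ) (T : ℝ)
    (Pe : Measure (Fin d → ℝ)) (μ : Y → ℝ) : EReal :=
  ⨆ U : Y → ℝ, (((∑ y, μ y * U y) - Grcl d Z T Pe U : ℝ) : EReal)

/-- **Example 2 (random coefficients logit).** The generalized entropy of choice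
of the random coefficients logit model is an entropically regularized optimal
transport problem: `G*(μ)` equals the infimum over conditional choice
probabilities `π(e)` with margins `μ` of
`∫ [T Σ_ŷ π_ŷ(e) log π_ŷ(e) − Σ_ŷ ⟨Z_ŷ, e⟩ π_ŷ(e)] dP_e(e)`. -/
theorem rcl_entropy_regularized_ot
    (d : ℕ) (hd : 0 < d) (Z : Option Y → Fin d → ℝ) (T : ℝ) (hT : 0 < T)
    (Pe : Measure (Fin d → ℝ)) [IsProbabilityMeasure Pe]
    (hPe : Integrable (fun e => ‖e‖) Pe)
    (μ : Y → ℝ) (hμ : ∀ y, 0 ≤ μ y) (hsum : ∑ y, μ y ≤ 1) :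
    GrclStar d Z T Pe μ =
      ⨅ π : {π : (Fin d → ℝ) → Option Y → ℝ //
          Measurable π ∧
          (∀ᵐ e ∂Pe, (∀ yo : Option Y, 0 ≤ π e yo) ∧ (∑ yo : Option Y, π e yo) = 1) ∧
          (∀ yo : Option Y,
            ∫ e, (π : (Fin d → ℝ) → Option Y → ℝ) e yo ∂Pe =
              yo.elim (1 - ∑ y, μ y) μ)},
        ((∫ e, (T * ∑ yo : Option Y,
            (π : (Fin d → ℝ) → Option Y → ℝ) e yo *
              Real.log ((π : (Fin d → ℝ) → Option Y → ℝ) e yo)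
          - ∑ yo : Option Y, (∑ i, Z yo i * e i) *
              (π : (Fin d → ℝ) → Option Y → ℝ) e yo) ∂Pe : ℝ) : EReal) := by
  classical
  have hsuniv : (Finset.univ : Finset (Option Y)).Nonempty := Finset.univ_nonempty
  set μh : Option Y → ℝ := fun yo => yo.elim (1 - ∑ y, μ y) μ with hμh
  have hμh_nonneg : ∀ yo, 0 ≤ μh yo := by
    intro yo
    cases yo with
    | none => show (0:ℝ) ≤ 1 - ∑ y, μ y; linarith
    | some y => exact hμ y
  have hμh_sum : ∑ yo : Option Y, μh yo = 1 := by
    rw [Fintype.sum_option]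
    show (1 - ∑ y, μ y) + ∑ y, μ y = 1
    ring
  set S : Finset (Option Y) := Finset.univ.filter (fun yo => 0 < μh yo) with hSdef
  have hSpos : ∀ yo ∈ S, 0 < μh yo := by
    intro yo hyo
    rw [hSdef, Finset.mem_filter] at hyo
    exact hyo.2
  have hzero : ∀ yo, yo ∉ S → μh yo = 0 := by
    intro yo hyo
    rw [hSdef, Finset.mem_filter] at hyo
    push_neg at hyo
    have h1 := hyo (Finset.mem_univ yo)
    linarith [hμh_nonneg yo, h1]
  have hSsum : ∑ yo ∈ S, μh yo = 1 := by
    rw [← hμh_sum]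
    exact Finset.sum_subset (Finset.subset_univ S) (fun yo _ h => hzero yo h)
  have hSne : S.Nonempty := by
    rcases Finset.eq_empty_or_nonempty S with h | h
    · exfalso
      rw [h, Finset.sum_empty] at hSsum
      norm_num at hSsum
    · exact h
  set s0 : Option Y := if (none : Option Y) ∈ S then none else hSne.choose with hs0def
  have hs0S : s0 ∈ S := by
    by_cases h : (none : Option Y) ∈ S
    · rw [hs0def, if_pos h]; exact h
    · rw [hs0def, if_neg h]; exact hSne.choose_spec
  obtain ⟨Vs, hVW, hVmin⟩ :=
    RclAux.exists_min Z T S Pe μh s0 hT hSne hPe hSpos hSsum hs0S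
  have hnu := RclAux.nu_eq_of_min Z T S Pe hT hSne hPe μh s0 hSpos hSsum hs0S Vs hVW hVmin
  set A : ℕ → Option Y → ℝ := fun m yo => if yo ∈ S then Vs yo else -(m:ℝ) with hA
  set L : ℝ := (∑ yo ∈ S, μh yo * Vs yo) - RclAux.Phi' Z T Pe S Vs with hL
  -- feasibility of the softmax plan
  have hfeas1 : Measurable (RclAux.pstar Z T S Vs) := RclAux.pstar_measurable Z T S Vs hSne
  have hfeas2 : ∀ᵐ e ∂Pe, (∀ yo : Option Y, 0 ≤ RclAux.pstar Z T S Vs e yo) ∧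
      (∑ yo : Option Y, RclAux.pstar Z T S Vs e yo) = 1 :=
    Filter.Eventually.of_forall fun e => RclAux.pstar_simplex Z T S Vs hSne e
  have hfeas3 : ∀ yo : Option Y, ∫ e, RclAux.pstar Z T S Vs e yo ∂Pe
      = yo.elim (1 - ∑ y, μ y) μ := by
    intro yo
    have h1 := RclAux.pstar_integral Z T S Vs Pe hSne yo
    have h2 : (yo.elim (1 - ∑ y, μ y) μ : ℝ) = μh yo := rfl
    rw [h1, h2]
    by_cases h : yo ∈ S
    · rw [if_pos h]; exact hnu yo h
    · rw [if_neg h]; exact (hzero yo h).symm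
  -- value of the softmax plan
  have hcost : ∫ e, (T * ∑ yo : Option Y,
      RclAux.pstar Z T S Vs e yo * Real.log (RclAux.pstar Z T S Vs e yo)
      - ∑ yo : Option Y, (∑ i, Z yo i * e i) * RclAux.pstar Z T S Vs e yo) ∂Pe = L := by
    have h1 := RclAux.cost_pstar Z T S Vs Pe hT hSne hPe
    simp only [RclAux.cz] at h1
    have h2 : ∑ yo ∈ S, RclAux.nu' Z T Pe S Vs yo * Vs yo = ∑ yo ∈ S, μh yo * Vs yo :=
      Finset.sum_congr rfl fun yo hyo => by rw [hnu yo hyo]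
    rw [h1, h2, hL]
  -- the approximating potentials and their values
  set Um : ℕ → Y → ℝ := fun m y => A m (some y) - A m none with hUm
  have ham : ∀ m : ℕ, (∑ y, μ y * Um m y) - Grcl d Z T Pe (Um m)
      = (∑ yo ∈ S, μh yo * Vs yo) - RclAux.Phi' Z T Pe Finset.univ (A m) := by
    intro m
    have hopt : optExt (Um m) = fun yo => A m yo - A m none := by
      funext yo
      cases yo with
      | none => show (0:ℝ) = A m none - A m none; ring
      | some y => rfl
    have hGr : Grcl d Z T Pe (Um m) = RclAux.Phi' Z T Pe Finset.univ (optExt (Um m)) := rfl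
    have hshift : RclAux.Phi' Z T Pe Finset.univ (fun yo => A m yo - A m none)
        = RclAux.Phi' Z T Pe Finset.univ (A m) - A m none :=
      RclAux.Phi_shift Z T Finset.univ (A m) Pe hT hsuniv hPe (A m none)
    have hsum1 : ∑ y, μ y * Um m y
        = (∑ y, μ y * A m (some y)) - (∑ y, μ y) * A m none := by
      rw [hUm]
      simp only
      rw [Finset.sum_congr rfl (fun y _ => mul_sub (μ y) (A m (some y)) (A m none)),
        Finset.sum_sub_distrib, ← Finset.sum_mul]
    have hsum2 : ∑ yo : Option Y, μh yo * A m yo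
        = μh none * A m none + ∑ y, μ y * A m (some y) := by
      rw [Fintype.sum_option]
      rfl
    have hμhnone : μh none = 1 - ∑ y, μ y := rfl
    have hSsub : ∑ yo : Option Y, μh yo * A m yo = ∑ yo ∈ S, μh yo * Vs yo := by
      rw [← Finset.sum_subset (Finset.subset_univ S)
        (fun yo _ h => by rw [hzero yo h, zero_mul])]
      refine Finset.sum_congr rfl fun yo hyo => ?_
      have : A m yo = Vs yo := by rw [hA]; simp only [if_pos hyo]
      rw [this]
    rw [hGr, hopt, hshift, hsum1]
    rw [hμhnone] at hsum2
    linarith [hsum2, hSsub]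
  have htend : Filter.Tendsto (fun m : ℕ =>
      (∑ yo ∈ S, μh yo * Vs yo) - RclAux.Phi' Z T Pe Finset.univ (A m))
      Filter.atTop (𝓝 L) := by
    rw [hL]
    exact (RclAux.tend_Phi Z T S Vs Pe hT hSne hPe).const_sub _
  have hbound : ∀ m : ℕ,
      (((∑ yo ∈ S, μh yo * Vs yo) - RclAux.Phi' Z T Pe Finset.univ (A m) : ℝ) : EReal)
        ≤ GrclStar d Z T Pe μ := by
    intro m
    rw [← ham m]
    exact le_iSup (fun U : Y → ℝ => (((∑ y, μ y * U y) - Grcl d Z T Pe U : ℝ) : EReal)) (Um m)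
  have hLle : (L : EReal) ≤ GrclStar d Z T Pe μ := by
    have hco : Filter.Tendsto (fun m : ℕ =>
        (((∑ yo ∈ S, μh yo * Vs yo) - RclAux.Phi' Z T Pe Finset.univ (A m) : ℝ) : EReal))
        Filter.atTop (𝓝 (L : EReal)) := EReal.tendsto_coe.2 htend
    exact le_of_tendsto hco (Filter.Eventually.of_forall hbound)
  refine le_antisymm ?_ ?_
  · -- weak duality: sup ≤ inf
    refine iSup_le fun U => le_iInf fun πsub => ?_
    obtain ⟨hπm, hπae, hπint⟩ := πsub.2
    rw [EReal.coe_le_coe_iff]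
    have hw := RclAux.weak_duality Z T Pe hT hPe μh (πsub : (Fin d → ℝ) → Option Y → ℝ)
      hπm hπae (fun yo => by rw [hπint yo]) (optExt U)
    have hμU : ∑ yo : Option Y, μh yo * optExt U yo = ∑ y, μ y * U y := by
      rw [Fintype.sum_option]
      have : μh none * optExt U none = 0 := by
        show μh none * (0:ℝ) = 0
        ring
      rw [this, zero_add]
      rfl
    have hGr : Grcl d Z T Pe U = RclAux.Phi' Z T Pe Finset.univ (optExt U) := rfl
    rw [hμU, ← hGr] at hw
    simp only [RclAux.cz] at hw
    exact hw
  · -- inf ≤ sup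
    refine le_trans (iInf_le _ ⟨RclAux.pstar Z T S Vs, hfeas1, hfeas2, hfeas3⟩) ?_
    have hc2 : ((∫ e, (T * ∑ yo : Option Y,
        RclAux.pstar Z T S Vs e yo * Real.log (RclAux.pstar Z T S Vs e yo)
        - ∑ yo : Option Y, (∑ i, Z yo i * e i) * RclAux.pstar Z T S Vs e yo) ∂Pe : ℝ) : EReal)
        ≤ GrclStar d Z T Pe μ := by
      rw [hcost]
      exact hLle
    exact hc2

end
end
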